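/- arXiv:2601.04078 — 6 statements merged into one kernel-verified Lean document; each statement's English description precedes it below -/
import Mathlib

section
/- For any binary word X, N_0(X) · N_{10}(X) = N_{010}(X) + 2·N_{100}(X) + N_{10}(X). -/
/-!
Induct on `X` by prepending a letter. Prepending `1` adds `N_0` to `N_10` and `N_00` to `N_100`;
prepending `0` adds `1` to `N_0` and `N_10` to `N_010`. Both sides then grow by the same amount,
provided `N_0 ^ 2 = 2 N_00 + N_0` (ordered pairs of zeros: distinct ones in either order, or equal),
which is proved by the same induction.
-/

def patCount (w X : List Bool) : ℕ := X.sublists.count w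

namespace List

variable {α : Type*} [DecidableEq α]

theorem count_sublists_cons (a : α) (w X : List α) :
    (a :: X).sublists.count w = X.sublists.count w + (X.sublists.map (a :: ·)).count w := by
  rw [(sublists_cons_perm_append a X).count_eq, count_append]

theorem count_sublists_nil (X : List α) : X.sublists.count [] = 1 := by
  induction X with
  | nil => rfl
  | cons a X ih =>
    rw [count_sublists_cons, ih, count_eq_zero.mpr (by simp)]

theorem count_sublists_cons_cons (a b : α) (w X : List α) :
    (a :: X).sublists.count (b :: w) =
      X.sublists.count (b :: w) + if b = a then X.sublists.count w else 0 := by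
  rw [count_sublists_cons]
  split_ifs with hba
  · subst hba
    rw [count_map_of_injective _ _ cons_injective]
  · rw [count_eq_zero (l := X.sublists.map (a :: ·)).mpr (by simp [Ne.symm hba]), add_zero]

end List

@[simp]
theorem patCount_nil (X : List Bool) : patCount [] X = 1 :=
  X.count_sublists_nil

@[simp]
theorem patCount_cons_cons (a b : Bool) (w X : List Bool) :
    patCount (b :: w) (a :: X) = patCount (b :: w) X + if b = a then patCount w X else 0 :=
  List.count_sublists_cons_cons a b w X

theorem patCount_false_mul_self (X : List Bool) :
    patCount [false] X * patCount [false] X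
      = 2 * patCount [false, false] X + patCount [false] X := by
  induction X with
  | nil => rfl
  | cons a X ih =>
    cases a <;> simp only [patCount_cons_cons, patCount_nil, if_true, Bool.false_eq_true,
      if_false, add_zero]
    · linear_combination ih
    · linear_combination ih

theorem N0_mul_N10 (X : List Bool) :
    patCount [false] X * patCount [true, false] X
      = patCount [false, true, false] X + 2 * patCount [true, false, false] X
        + patCount [true, false] X := by
  induction X with
  | nil => rfl
  | cons a X ih =>
    cases a <;> simp only [patCount_cons_cons, patCount_nil, if_true, Bool.false_eq_true,
      Bool.true_eq_false, if_false, add_zero]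
    · linear_combination ih
    · linear_combination ih + patCount_false_mul_self X
end

section
/- Let f : [0,1] → [0,1] be measurable and let ρ_1 = ∫_0^1 f(x) dx and ρ_{10} = 2 ∫∫_{0≤x<y≤1} f(x)(1−f(y)) dx dy. Then 0 ≤ ρ_{10} ≤ 2 ρ_1 (1 − ρ_1), with the upper bound attained by the indicator function of [0, ρ_1]. -/
open MeasureTheory

/-- The pattern density ρ₁₀ of a sublebesgue density `f`. -/
noncomputable def rho10 (f : ℝ → ℝ) : ℝ :=
  2 * ∫ x in Set.Ioo (0:ℝ) 1, ∫ y in Set.Ioo x 1, f x * (1 - f y)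

open Set in
lemma intOn {g : ℝ → ℝ} (hg : Measurable g) (C : ℝ) (s : Set ℝ) (hs : MeasurableSet s)
    (hvol : volume s ≠ ⊤) (h : ∀ x ∈ s, |g x| ≤ C) : IntegrableOn g s := by
  haveI : IsFiniteMeasure (volume.restrict s) :=
    ⟨by simpa [Measure.restrict_apply_univ, lt_top_iff_ne_top]⟩
  exact Integrable.mono' (integrable_const C) hg.aestronglyMeasurable
    ((ae_restrict_iff' hs).2 (ae_of_all _ h))

lemma key_eq (f : ℝ → ℝ) (hf : Measurable f) (hf01 : ∀ x, f x ∈ Set.Icc (0:ℝ) 1) :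
    rho10 f = 2 * (∫ x in Set.Ioo (0:ℝ) 1, f x * (1 - x))
      - (∫ x in Set.Ioo (0:ℝ) 1, f x)^2 := by
  have hQm : MeasurableSet (Set.Ioo (0:ℝ) 1) := measurableSet_Ioo
  have hQvol : volume (Set.Ioo (0:ℝ) 1) ≠ ⊤ := by simp [Real.volume_Ioo]
  set μ := volume.restrict (Set.Ioo (0:ℝ) 1) with hμ
  haveI : IsFiniteMeasure μ := ⟨by simp [hμ, Real.volume_Ioo]⟩
  have hμuniv : (μ Set.univ).toReal = 1 := by
    simp [hμ, Measure.restrict_apply_univ, Real.volume_Ioo]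
  have h0 : ∀ x, 0 ≤ f x := fun x => (hf01 x).1
  have h1 : ∀ x, f x ≤ 1 := fun x => (hf01 x).2
  have habs : ∀ x, |f x| ≤ 1 := fun x => abs_le.2 ⟨by linarith [h0 x], h1 x⟩
  have habs' : ∀ x, |1 - f x| ≤ 1 := fun x => abs_le.2 ⟨by linarith [h1 x], by linarith [h0 x]⟩
  -- the two kernels
  set A : ℝ × ℝ → ℝ := Set.indicator {p : ℝ × ℝ | p.1 < p.2} (fun p => f p.1 * f p.2) with hA
  set B : ℝ × ℝ → ℝ := Set.indicator {p : ℝ × ℝ | p.2 < p.1} (fun p => f p.1 * f p.2) with hB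
  have msetA : MeasurableSet {p : ℝ × ℝ | p.1 < p.2} := measurableSet_lt measurable_fst measurable_snd
  have msetB : MeasurableSet {p : ℝ × ℝ | p.2 < p.1} := measurableSet_lt measurable_snd measurable_fst
  have hfm2 : Measurable (fun p : ℝ × ℝ => f p.1 * f p.2) :=
    (hf.comp measurable_fst).mul (hf.comp measurable_snd)
  have hAm : Measurable A := hfm2.indicator msetA
  have hBm : Measurable B := hfm2.indicator msetB
  have hAbd : ∀ p, |A p| ≤ 1 := by
    intro p; by_cases hp : p ∈ {p : ℝ × ℝ | p.1 < p.2}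
    · rw [hA, Set.indicator_of_mem hp, abs_mul]
      calc |f p.1| * |f p.2| ≤ 1 * 1 := mul_le_mul (habs _) (habs _) (abs_nonneg _) zero_le_one
        _ = 1 := one_mul 1
    · simp [hA, Set.indicator_of_notMem hp]
  have hBbd : ∀ p, |B p| ≤ 1 := by
    intro p; by_cases hp : p ∈ {p : ℝ × ℝ | p.2 < p.1}
    · rw [hB, Set.indicator_of_mem hp, abs_mul]
      calc |f p.1| * |f p.2| ≤ 1 * 1 := mul_le_mul (habs _) (habs _) (abs_nonneg _) zero_le_one
        _ = 1 := one_mul 1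
    · simp [hB, Set.indicator_of_notMem hp]
  -- integrability of f on subintervals
  have hfint : ∀ a b : ℝ, IntegrableOn f (Set.Ioo a b) := fun a b =>
    intOn hf 1 _ measurableSet_Ioo (by simp [Real.volume_Ioo]) (fun x _ => habs x)
  -- inner integrals IA, IB (as functions of x)
  set IA : ℝ → ℝ := fun x => ∫ y, A (x, y) ∂μ with hIA
  set IB : ℝ → ℝ := fun x => ∫ y, B (x, y) ∂μ with hIB
  have hIAm : StronglyMeasurable IA :=
    hAm.stronglyMeasurable.integral_prod_right'
  have hIBm : StronglyMeasurable IB :=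
    hBm.stronglyMeasurable.integral_prod_right'
  have hIAbd : ∀ x, |IA x| ≤ 1 := by
    intro x
    have h := norm_integral_le_of_norm_le_const (μ := μ) (f := fun y => A (x, y)) (C := 1)
      (ae_of_all _ fun y => by rw [Real.norm_eq_abs]; exact hAbd (x, y))
    rw [show μ.real Set.univ = 1 from hμuniv, mul_one] at h
    simpa [Real.norm_eq_abs] using h
  have hIBbd : ∀ x, |IB x| ≤ 1 := by
    intro x
    have h := norm_integral_le_of_norm_le_const (μ := μ) (f := fun y => B (x, y)) (C := 1)
      (ae_of_all _ fun y => by rw [Real.norm_eq_abs]; exact hBbd (x, y))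
    rw [show μ.real Set.univ = 1 from hμuniv, mul_one] at h
    simpa [Real.norm_eq_abs] using h
  have hIAint : IntegrableOn IA (Set.Ioo (0:ℝ) 1) :=
    intOn hIAm.measurable 1 _ hQm hQvol (fun x _ => hIAbd x)
  have hIBint : IntegrableOn IB (Set.Ioo (0:ℝ) 1) :=
    intOn hIBm.measurable 1 _ hQm hQvol (fun x _ => hIBbd x)
  -- evaluate IA on Q
  have hIAeq : ∀ x ∈ Set.Ioo (0:ℝ) 1, IA x = f x * ∫ y in Set.Ioo x 1, f y := by
    intro x hx
    have : (fun y => A (x, y)) = (Set.Ioi x).indicator (fun y => f x * f y) := by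
      funext y
      simp [hA, Set.indicator_apply, Set.mem_Ioi, Set.mem_setOf_eq]
    rw [hIA]
    simp only [hμ]
    rw [this, setIntegral_indicator measurableSet_Ioi, Set.Ioo_inter_Ioi,
      max_eq_right hx.1.le, integral_const_mul]
  -- evaluate IB on Q
  have hIBeq : ∀ x ∈ Set.Ioo (0:ℝ) 1, IB x = f x * ∫ y in Set.Ioo 0 x, f y := by
    intro x hx
    have : (fun y => B (x, y)) = (Set.Iio x).indicator (fun y => f x * f y) := by
      funext y
      simp [hB, Set.indicator_apply, Set.mem_Iio, Set.mem_setOf_eq]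
    rw [hIB]
    simp only [hμ]
    rw [this, setIntegral_indicator measurableSet_Iio, Set.Ioo_inter_Iio,
      min_eq_right hx.2.le, integral_const_mul]
  -- inner integral of rho10
  have hinner : ∀ x ∈ Set.Ioo (0:ℝ) 1,
      (∫ y in Set.Ioo x 1, f x * (1 - f y)) = f x * (1 - x) - IA x := by
    intro x hx
    have hc : IntegrableOn (fun _ : ℝ => f x) (Set.Ioo x 1) :=
      integrableOn_const (by simp [Real.volume_Ioo])
    have hm : IntegrableOn (fun y => f x * f y) (Set.Ioo x 1) := (hfint x 1).const_mul _
    have he : (fun y => f x * (1 - f y)) = fun y => f x - f x * f y := by funext y; ring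
    rw [he, integral_sub hc hm, setIntegral_const, Measure.real, Real.volume_Ioo,
      ENNReal.toReal_ofReal (by linarith [hx.2] : (0:ℝ) ≤ 1 - x), hIAeq x hx, smul_eq_mul,
      integral_const_mul]
    ring
  -- integrability of f x * (1 - x)
  have hf1x : IntegrableOn (fun x => f x * (1 - x)) (Set.Ioo (0:ℝ) 1) := by
    refine intOn (hf.mul (measurable_const.sub measurable_id)) 1 _ hQm hQvol ?_
    intro x hx
    show |f x * (1 - x)| ≤ 1; rw [abs_mul]
    have h1x : |1 - x| ≤ 1 := abs_le.2 ⟨by linarith [hx.2], by linarith [hx.1]⟩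
    calc |f x| * |1 - x| ≤ 1 * 1 := mul_le_mul (habs x) h1x (abs_nonneg _) zero_le_one
      _ = 1 := one_mul 1
  -- rho10 in terms of IA
  have hrho : rho10 f = 2 * ((∫ x in Set.Ioo (0:ℝ) 1, f x * (1 - x))
      - ∫ x in Set.Ioo (0:ℝ) 1, IA x) := by
    rw [rho10]
    congr 1
    rw [setIntegral_congr_fun hQm hinner, integral_sub hf1x hIAint]
  -- Fubini: T = S
  have hBint2 : Integrable B (μ.prod μ) :=
    Integrable.mono' (integrable_const 1) hBm.aestronglyMeasurable
      (ae_of_all _ fun p => by rw [Real.norm_eq_abs]; exact hBbd p)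
  have hswap : ∫ x, (∫ y, B (x, y) ∂μ) ∂μ = ∫ y, (∫ x, B (x, y) ∂μ) ∂μ :=
    integral_integral_swap hBint2
  have hTS : ∫ x in Set.Ioo (0:ℝ) 1, IB x = ∫ x in Set.Ioo (0:ℝ) 1, IA x := by
    have h2 : ∫ y, (∫ x, B (x, y) ∂μ) ∂μ = ∫ y in Set.Ioo (0:ℝ) 1, IA y := by
      refine setIntegral_congr_fun hQm ?_
      intro y hy
      have he : (fun x => B (x, y)) = (Set.Ioi y).indicator (fun x => f x * f y) := by
        funext x
        simp [hB, Set.indicator_apply, Set.mem_Ioi, Set.mem_setOf_eq]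
      calc ∫ x, B (x, y) ∂μ = ∫ x in Set.Ioo y 1, f x * f y := by
            rw [hμ, he, setIntegral_indicator measurableSet_Ioi, Set.Ioo_inter_Ioi,
              max_eq_right hy.1.le]
        _ = (∫ x in Set.Ioo y 1, f x) * f y := integral_mul_const _ _
        _ = IA y := by rw [hIAeq y hy]; ring
    calc ∫ x in Set.Ioo (0:ℝ) 1, IB x = ∫ x, (∫ y, B (x, y) ∂μ) ∂μ := rfl
      _ = ∫ y, (∫ x, B (x, y) ∂μ) ∂μ := hswap
      _ = ∫ y in Set.Ioo (0:ℝ) 1, IA y := h2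
  -- S + T = ρ²
  have haddpt : ∀ x ∈ Set.Ioo (0:ℝ) 1,
      IA x + IB x = f x * ∫ t in Set.Ioo (0:ℝ) 1, f t := by
    intro x hx
    have hi1 : Integrable (fun y => A (x, y)) μ :=
      Integrable.mono' (integrable_const 1)
        (hAm.comp measurable_prodMk_left).aestronglyMeasurable
        (ae_of_all _ fun y => by rw [Real.norm_eq_abs]; exact hAbd (x, y))
    have hi2 : Integrable (fun y => B (x, y)) μ :=
      Integrable.mono' (integrable_const 1)
        (hBm.comp measurable_prodMk_left).aestronglyMeasurable
        (ae_of_all _ fun y => by rw [Real.norm_eq_abs]; exact hBbd (x, y))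
    have hptwise : ∀ y, y ≠ x → A (x, y) + B (x, y) = f x * f y := by
      intro y hy
      rcases lt_or_gt_of_ne hy with h | h
      · simp [hA, hB, Set.indicator_apply, Set.mem_setOf_eq, h, not_lt.2 h.le]
      · simp [hA, hB, Set.indicator_apply, Set.mem_setOf_eq, h, not_lt.2 h.le]
    have hae : (fun y => A (x, y) + B (x, y)) =ᵐ[μ] fun y => f x * f y := by
      refine ae_restrict_of_ae ?_
      have hnull : {y : ℝ | ¬ (A (x, y) + B (x, y) = f x * f y)} ⊆ {x} := by
        intro y hy
        by_contra hne
        exact hy (hptwise y (by simpa using hne))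
      exact (ae_iff).2 (measure_mono_null hnull (by simp))
    have : IA x + IB x = ∫ y, (A (x, y) + B (x, y)) ∂μ := (integral_add hi1 hi2).symm
    rw [this, integral_congr_ae hae]
    calc ∫ y, f x * f y ∂μ = f x * ∫ y, f y ∂μ := integral_const_mul _ _
      _ = f x * ∫ t in Set.Ioo (0:ℝ) 1, f t := rfl
  have hsum : (∫ x in Set.Ioo (0:ℝ) 1, IA x) + ∫ x in Set.Ioo (0:ℝ) 1, IB x
      = (∫ x in Set.Ioo (0:ℝ) 1, f x) ^ 2 := by
    rw [← integral_add hIAint hIBint, setIntegral_congr_fun hQm haddpt,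
      integral_mul_const]
    ring
  rw [hrho]
  rw [hTS] at hsum
  linarith [hsum]

lemma ind_setint (ρ : ℝ) (hρ0 : 0 ≤ ρ) (hρ1 : ρ ≤ 1) (g : ℝ → ℝ) :
    ∫ x in Set.Ioo (0:ℝ) 1, (Set.Icc 0 ρ).indicator (fun _ => (1:ℝ)) x * g x
      = ∫ x in (0:ℝ)..ρ, g x := by
  have h1 : (fun x => (Set.Icc 0 ρ).indicator (fun _ => (1:ℝ)) x * g x)
      = (Set.Icc 0 ρ).indicator g := by
    funext x
    by_cases hx : x ∈ Set.Icc 0 ρ <;> simp [Set.indicator_apply, hx]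
  have h2 : (Set.Ioo (0:ℝ) 1 ∩ Set.Icc 0 ρ : Set ℝ) =ᵐ[volume] (Set.Ioc 0 ρ : Set ℝ) := by
    rw [MeasureTheory.ae_eq_set]
    constructor
    · have he : (Set.Ioo (0:ℝ) 1 ∩ Set.Icc 0 ρ) \ Set.Ioc 0 ρ = ∅ := by
        ext x
        simp only [Set.mem_diff, Set.mem_inter_iff, Set.mem_Ioo, Set.mem_Icc, Set.mem_Ioc,
          Set.mem_empty_iff_false, iff_false, not_and]
        rintro ⟨⟨ha, hb⟩, ⟨hc, hd⟩⟩ h5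
        exact h5 ha hd
      rw [he]; simp
    · refine measure_mono_null (fun x hx => ?_) (Real.volume_singleton (a := 1))
      rcases hx with ⟨⟨hx0, hxρ⟩, hns⟩
      have hx1 : ¬ (x < 1) := by
        intro hlt
        exact hns ⟨⟨hx0, hlt⟩, ⟨hx0.le, hxρ⟩⟩
      have : x = 1 := le_antisymm (hxρ.trans hρ1) (not_lt.1 hx1)
      simp [this]
  rw [h1, setIntegral_indicator measurableSet_Icc, setIntegral_congr_set h2,
    ← intervalIntegral.integral_of_le hρ0]

theorem rho10_bounds (f : ℝ → ℝ) (hf : Measurable f)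
    (hf01 : ∀ x, f x ∈ Set.Icc (0:ℝ) 1)
    (ρ : ℝ) (hρ : ρ = ∫ x in Set.Ioo (0:ℝ) 1, f x) :
    0 ≤ rho10 f ∧ rho10 f ≤ 2 * ρ * (1 - ρ) ∧
      rho10 (Set.indicator (Set.Icc 0 ρ) (fun _ => (1:ℝ))) = 2 * ρ * (1 - ρ) := by
  have hQm : MeasurableSet (Set.Ioo (0:ℝ) 1) := measurableSet_Ioo
  have hQvol : volume (Set.Ioo (0:ℝ) 1) ≠ ⊤ := by simp [Real.volume_Ioo]
  have h0 : ∀ x, 0 ≤ f x := fun x => (hf01 x).1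
  have h1 : ∀ x, f x ≤ 1 := fun x => (hf01 x).2
  have habs : ∀ x, |f x| ≤ 1 := fun x => abs_le.2 ⟨by linarith [h0 x], h1 x⟩
  have hfint : IntegrableOn f (Set.Ioo (0:ℝ) 1) :=
    intOn hf 1 _ hQm hQvol (fun x _ => habs x)
  have hρ0 : 0 ≤ ρ := hρ ▸ setIntegral_nonneg hQm (fun x _ => h0 x)
  have hρ1 : ρ ≤ 1 := by
    rw [hρ]
    calc ∫ x in Set.Ioo (0:ℝ) 1, f x ≤ ∫ _x in Set.Ioo (0:ℝ) 1, (1:ℝ) :=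
          setIntegral_mono_on hfint
            (intOn measurable_const 1 _ hQm hQvol (by simp)) hQm (fun x _ => h1 x)
      _ = 1 := by simp [Real.volume_Ioo]
  set ind : ℝ → ℝ := Set.indicator (Set.Icc 0 ρ) (fun _ => (1:ℝ)) with hind
  have hindm : Measurable ind := measurable_const.indicator measurableSet_Icc
  have hind01 : ∀ x, ind x ∈ Set.Icc (0:ℝ) 1 := fun x => by
    by_cases hx : x ∈ Set.Icc 0 ρ <;> simp [hind, Set.indicator_apply, hx]
  have hindabs : ∀ x, |ind x| ≤ 1 := fun x =>
    abs_le.2 ⟨by linarith [(hind01 x).1], (hind01 x).2⟩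
  have hindint : IntegrableOn ind (Set.Ioo (0:ℝ) 1) :=
    intOn hindm 1 _ hQm hQvol (fun x _ => hindabs x)
  have hI2 : ∫ x in (0:ℝ)..ρ, (1 - x) = ρ - ρ^2/2 := by
    rw [intervalIntegral.integral_sub intervalIntegrable_const
      intervalIntegral.intervalIntegrable_id, intervalIntegral.integral_const,
      integral_id]
    simp
  have hind_int : ∫ x in Set.Ioo (0:ℝ) 1, ind x = ρ := by
    have h := ind_setint ρ hρ0 hρ1 (fun _ => (1:ℝ))
    simp only [mul_one, intervalIntegral.integral_const, smul_eq_mul, sub_zero, one_mul] at h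
    rw [hind]
    exact h
  have hind_int2 : ∫ x in Set.Ioo (0:ℝ) 1, ind x * (1 - x) = ρ - ρ^2/2 := by
    rw [hind]
    exact (ind_setint ρ hρ0 hρ1 (fun x => 1 - x)).trans hI2
  -- bathtub inequality
  have hm_f1x : IntegrableOn (fun x => f x * (1 - x)) (Set.Ioo (0:ℝ) 1) := by
    refine intOn (hf.mul (measurable_const.sub measurable_id)) 1 _ hQm hQvol ?_
    intro x hx
    show |f x * (1 - x)| ≤ 1; rw [abs_mul]
    have h1x : |1 - x| ≤ 1 := abs_le.2 ⟨by linarith [hx.2], by linarith [hx.1]⟩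
    calc |f x| * |1 - x| ≤ 1 * 1 := mul_le_mul (habs x) h1x (abs_nonneg _) zero_le_one
      _ = 1 := one_mul 1
  have hm_ind1x : IntegrableOn (fun x => ind x * (1 - x)) (Set.Ioo (0:ℝ) 1) := by
    refine intOn (hindm.mul (measurable_const.sub measurable_id)) 1 _ hQm hQvol ?_
    intro x hx
    show |ind x * (1 - x)| ≤ 1; rw [abs_mul]
    have h1x : |1 - x| ≤ 1 := abs_le.2 ⟨by linarith [hx.2], by linarith [hx.1]⟩
    calc |ind x| * |1 - x| ≤ 1 * 1 :=
        mul_le_mul (hindabs x) h1x (abs_nonneg _) zero_le_one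
      _ = 1 := one_mul 1
  have hm_diff : IntegrableOn (fun x => (f x - ind x) * (1 - ρ)) (Set.Ioo (0:ℝ) 1) := by
    refine intOn ((hf.sub hindm).mul measurable_const) 1 _ hQm hQvol ?_
    intro x _
    show |(f x - ind x) * (1 - ρ)| ≤ 1; rw [abs_mul]
    have ha : |f x - ind x| ≤ 1 :=
      abs_le.2 ⟨by linarith [h0 x, (hind01 x).2], by linarith [h1 x, (hind01 x).1]⟩
    have hb : |1 - ρ| ≤ 1 := abs_le.2 ⟨by linarith, by linarith⟩
    calc |f x - ind x| * |1 - ρ| ≤ 1 * 1 := mul_le_mul ha hb (abs_nonneg _) zero_le_one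
      _ = 1 := one_mul 1
  have hpt : ∀ x ∈ Set.Ioo (0:ℝ) 1,
      f x * (1 - x) ≤ ind x * (1 - x) + (f x - ind x) * (1 - ρ) := by
    intro x hx
    by_cases hxρ : x ≤ ρ
    · have hi : ind x = 1 := by
        simp [hind, Set.indicator_apply, Set.mem_Icc, hx.1.le, hxρ]
      rw [hi]
      nlinarith [h1 x]
    · have hi : ind x = 0 := by
        simp only [hind, Set.indicator_apply, Set.mem_Icc, ite_eq_right_iff, and_imp]
        intro _ h
        exact absurd h hxρ
      rw [hi]
      nlinarith [h0 x]
  have hbath : ∫ x in Set.Ioo (0:ℝ) 1, f x * (1 - x) ≤ ρ - ρ^2/2 := by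
    have hle := setIntegral_mono_on hm_f1x (hm_ind1x.add hm_diff) hQm hpt
    simp only [Pi.add_apply] at hle
    rw [integral_add hm_ind1x hm_diff, integral_mul_const,
      integral_sub hfint hindint, hind_int, ← hρ, hind_int2] at hle
    simpa using hle
  refine ⟨?_, ?_, ?_⟩
  · have h : 0 ≤ ∫ x in Set.Ioo (0:ℝ) 1, ∫ y in Set.Ioo x 1, f x * (1 - f y) :=
      setIntegral_nonneg hQm (fun x _ =>
        setIntegral_nonneg measurableSet_Ioo (fun y _ =>
          mul_nonneg (h0 x) (by linarith [h1 y])))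
    rw [rho10]
    linarith
  · rw [key_eq f hf hf01, ← hρ]
    nlinarith [hbath]
  · rw [key_eq ind hindm hind01, hind_int, hind_int2]
    ring
end

section
/- For every ρ ∈ [0,1] and every δ ∈ [0, 2ρ(1−ρ)], there exists a measurable f : [0,1] → [0,1] with ∫_0^1 f = ρ and 2∫∫_{0≤x<y≤1} f(x)(1−f(y)) dx dy = δ. Hence the feasibility region E_{1,10} equals {(ρ, δ) : ρ ∈ [0,1], 0 ≤ δ ≤ 2ρ(1−ρ)}. -/
open MeasureTheory

lemma vol_inter {a b c d : ℝ} (hca : c ≤ a) (hab : a ≤ b) (hbd : b ≤ d) :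
    volume (Set.Ioo c d ∩ Set.Ioc a b) = ENNReal.ofReal (b - a) := by
  apply le_antisymm
  · calc volume (Set.Ioo c d ∩ Set.Ioc a b) ≤ volume (Set.Icc a b) := by
          apply measure_mono
          intro x hx
          exact ⟨le_of_lt hx.2.1, hx.2.2⟩
    _ = ENNReal.ofReal (b - a) := Real.volume_Icc
  · calc ENNReal.ofReal (b - a) = volume (Set.Ioo a b) := (Real.volume_Ioo).symm
    _ ≤ volume (Set.Ioo c d ∩ Set.Ioc a b) := by
          apply measure_mono
          intro x hx
          exact ⟨⟨lt_of_le_of_lt hca hx.1, lt_of_lt_of_le hx.2 hbd⟩, hx.1, le_of_lt hx.2⟩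

lemma vol_inter2 {a b x : ℝ} (hax : a ≤ x) (hxb : x ≤ b) (hb1 : b ≤ 1) :
    volume (Set.Ioo x 1 ∩ Set.Ioc a b) = ENNReal.ofReal (b - x) := by
  apply le_antisymm
  · calc volume (Set.Ioo x 1 ∩ Set.Ioc a b) ≤ volume (Set.Icc x b) := by
          apply measure_mono
          intro y hy
          exact ⟨le_of_lt hy.1.1, hy.2.2⟩
    _ = ENNReal.ofReal (b - x) := Real.volume_Icc
  · calc ENNReal.ofReal (b - x) = volume (Set.Ioo x b) := (Real.volume_Ioo).symm
    _ ≤ volume (Set.Ioo x 1 ∩ Set.Ioc a b) := by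
          apply measure_mono
          intro y hy
          exact ⟨⟨hy.1, lt_of_lt_of_le hy.2 hb1⟩, lt_of_le_of_lt hax hy.1, le_of_lt hy.2⟩

lemma key (a b : ℝ) (h0 : 0 ≤ a) (hab : a ≤ b) (hb1 : b ≤ 1) :
    ∃ f : ℝ → ℝ, Measurable f ∧ (∀ x, f x ∈ Set.Icc (0:ℝ) 1) ∧
      (∫ x in Set.Ioo (0:ℝ) 1, f x) = b - a ∧ rho10 f = 2 * ((b - a) * (1 - b)) := by
  set f : ℝ → ℝ := (Set.Ioc a b).indicator (fun _ => (1:ℝ)) with hf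
  have hmeas : Measurable f := (measurable_const).indicator measurableSet_Ioc
  have hrange : ∀ x, f x ∈ Set.Icc (0:ℝ) 1 := by
    intro x
    by_cases hx : x ∈ Set.Ioc a b
    · simp [hf, hx]
    · simp [hf, hx]
  refine ⟨f, hmeas, hrange, ?_, ?_⟩
  · rw [hf, setIntegral_indicator measurableSet_Ioc, setIntegral_const, measureReal_def,
      vol_inter h0 hab hb1, smul_eq_mul, mul_one, ENNReal.toReal_ofReal (by linarith)]
  · -- compute rho10
    have hinner : ∀ x ∈ Set.Ioo (0:ℝ) 1,
        (∫ y in Set.Ioo x 1, f x * (1 - f y))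
          = (Set.Ioc a b).indicator (fun _ => 1 - b) x := by
      intro x hx
      by_cases hxm : x ∈ Set.Ioc a b
      · have hfx : f x = 1 := by simp [hf, hxm]
        have hint1 : (∫ y in Set.Ioo x 1, (1:ℝ)) = 1 - x := by
          rw [setIntegral_const, measureReal_def, Real.volume_Ioo, smul_eq_mul, mul_one,
            ENNReal.toReal_ofReal (by linarith [hx.2])]
        have hintf : (∫ y in Set.Ioo x 1, f y) = b - x := by
          rw [hf, setIntegral_indicator measurableSet_Ioc, setIntegral_const, measureReal_def,
            vol_inter2 (le_of_lt hxm.1) hxm.2 hb1, smul_eq_mul, mul_one,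
            ENNReal.toReal_ofReal (by linarith [hxm.2])]
        have hI1 : IntegrableOn (fun _ : ℝ => (1:ℝ)) (Set.Ioo x 1) volume :=
          (integrableOn_const_iff).mpr (Or.inr measure_Ioo_lt_top)
        have hIf : IntegrableOn f (Set.Ioo x 1) volume := by
          rw [hf]
          exact (hI1.indicator measurableSet_Ioc)
        calc (∫ y in Set.Ioo x 1, f x * (1 - f y))
            = ∫ y in Set.Ioo x 1, ((1:ℝ) - f y) := by
              simp [hfx]
          _ = (∫ y in Set.Ioo x 1, (1:ℝ)) - ∫ y in Set.Ioo x 1, f y :=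
              integral_sub hI1 hIf
          _ = (1 - x) - (b - x) := by rw [hint1, hintf]
          _ = (Set.Ioc a b).indicator (fun _ => 1 - b) x := by
              rw [Set.indicator_of_mem hxm]; ring
      · have hfx : f x = 0 := by simp [hf, hxm]
        simp [hfx, Set.indicator_of_notMem hxm]
    have houter : (∫ x in Set.Ioo (0:ℝ) 1, ∫ y in Set.Ioo x 1, f x * (1 - f y))
        = (b - a) * (1 - b) := by
      rw [setIntegral_congr_fun measurableSet_Ioo hinner,
        setIntegral_indicator measurableSet_Ioc, setIntegral_const, measureReal_def,
        vol_inter h0 hab hb1, smul_eq_mul, ENNReal.toReal_ofReal (by linarith)]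
    rw [rho10, houter]

theorem feasibility_E1_10 (ρ δ : ℝ) (hρ : ρ ∈ Set.Icc (0:ℝ) 1)
    (hδ : δ ∈ Set.Icc (0:ℝ) (2 * ρ * (1 - ρ))) :
    ∃ f : ℝ → ℝ, Measurable f ∧ (∀ x, f x ∈ Set.Icc (0:ℝ) 1) ∧
      (∫ x in Set.Ioo (0:ℝ) 1, f x) = ρ ∧ rho10 f = δ := by
  obtain ⟨hρ0, hρ1⟩ := hρ
  obtain ⟨hδ0, hδ2⟩ := hδ
  rcases eq_or_lt_of_le hρ0 with h0 | hρpos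
  · -- ρ = 0, hence δ = 0
    have hρ' : ρ = 0 := h0.symm
    have hδ' : δ = 0 := le_antisymm (by nlinarith) hδ0
    obtain ⟨f, hm, hr, hi, h10⟩ := key 0 0 le_rfl le_rfl (by norm_num)
    exact ⟨f, hm, hr, by simpa [hρ'] using hi, by simp [h10, hδ']⟩
  · set a : ℝ := 1 - ρ - δ / (2 * ρ) with ha
    set b : ℝ := 1 - δ / (2 * ρ) with hb
    have h2ρ : (0:ℝ) < 2 * ρ := by linarith
    have hdiv0 : 0 ≤ δ / (2 * ρ) := div_nonneg hδ0 (le_of_lt h2ρ)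
    have hdivle : δ / (2 * ρ) ≤ 1 - ρ := by
      rw [div_le_iff₀ h2ρ]
      nlinarith
    have h0a : 0 ≤ a := by rw [ha]; linarith
    have hab : a ≤ b := by rw [ha, hb]; linarith
    have hb1 : b ≤ 1 := by rw [hb]; linarith
    obtain ⟨f, hm, hr, hi, h10⟩ := key a b h0a hab hb1
    have hba : b - a = ρ := by rw [ha, hb]; ring
    have h1b : 2 * ((b - a) * (1 - b)) = δ := by
      rw [hba, hb]
      field_simp
      ring
    exact ⟨f, hm, hr, by rw [hi, hba], by rw [h10, h1b]⟩
end

section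
/- For any measure μ on an interval [a,b] that is not supported on fewer than k+1 points, the (k+1)-fold integral ∫…∫ y_1 y_2^2 … y_k^k ∏_{i<j} (y_j − y_i) dμ(y_0)…dμ(y_k) is strictly positive. -/
open MeasureTheory

open Finset in
noncomputable def Vd (n : ℕ) (y : Fin n → ℝ) : ℝ := (Matrix.vandermonde y).det

lemma Vd_cont (n : ℕ) : Continuous (Vd n) := by
  have h : Vd n = fun y => ∏ i : Fin n, ∏ j ∈ Finset.Ioi i, (y j - y i) := by
    funext y; exact Matrix.det_vandermonde y
  rw [h]; fun_prop

lemma prod_pairs_eq {n : ℕ} (y : Fin n → ℝ) :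
    ∏ p ∈ Finset.univ.filter (fun p : Fin n × Fin n => p.1 < p.2), (y p.2 - y p.1)
      = Vd n y := by
  rw [Vd, Matrix.det_vandermonde, Finset.prod_sigma']
  refine Finset.prod_nbij' (fun p => ⟨p.1, p.2⟩) (fun x => (x.1, x.2)) ?_ ?_ ?_ ?_ ?_ <;>
    simp [Finset.mem_sigma]

lemma Vd_perm {n : ℕ} (y : Fin n → ℝ) (σ : Equiv.Perm (Fin n)) :
    Vd n (y ∘ σ) = ((Equiv.Perm.sign σ : ℤ) : ℝ) * Vd n y := by
  have h : Matrix.vandermonde (y ∘ σ) = (Matrix.vandermonde y).submatrix σ id := rfl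
  rw [Vd, h, Matrix.det_permute, Vd]

lemma sym_sum (n : ℕ) (y : Fin n → ℝ) :
    ∑ σ : Equiv.Perm (Fin n), (∏ i, y (σ i) ^ (i : ℕ)) * Vd n (y ∘ σ) = (Vd n y) ^ 2 := by
  have key : ∑ σ : Equiv.Perm (Fin n),
      ((Equiv.Perm.sign σ : ℤ) : ℝ) * ∏ i, y (σ i) ^ (i : ℕ) = Vd n y := by
    rw [Vd, Matrix.det_apply']
    rfl
  calc ∑ σ : Equiv.Perm (Fin n), (∏ i, y (σ i) ^ (i : ℕ)) * Vd n (y ∘ σ)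
      = (∑ σ : Equiv.Perm (Fin n),
          ((Equiv.Perm.sign σ : ℤ) : ℝ) * ∏ i, y (σ i) ^ (i : ℕ)) * Vd n y := by
        rw [Finset.sum_mul]
        refine Finset.sum_congr rfl fun σ _ => ?_
        rw [Vd_perm]
        ring
    _ = (Vd n y) ^ 2 := by rw [key]; ring

lemma integrable_of_cont {n : ℕ} (a b : ℝ) (μ : Measure ℝ) [IsFiniteMeasure μ]
    (hsupp : μ (Set.Icc a b)ᶜ = 0) (g : (Fin n → ℝ) → ℝ) (hg : Continuous g) :
    Integrable g (Measure.pi fun _ : Fin n => μ) := by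
  set π := Measure.pi fun _ : Fin n => μ with hπ
  set A : Set (Fin n → ℝ) := Set.pi Set.univ fun _ : Fin n => Set.Icc a b with hA
  have hmeas : MeasurableSet A := MeasurableSet.univ_pi fun _ => measurableSet_Icc
  have hIcc : μ (Set.Icc a b) = μ Set.univ := by
    have := measure_add_measure_compl (μ := μ) (s := Set.Icc a b) measurableSet_Icc
    rwa [hsupp, add_zero] at this
  have hAfull : π Aᶜ = 0 := by
    rw [measure_compl hmeas (measure_ne_top _ _)]
    rw [hA, Measure.pi_pi, Measure.pi_univ]
    simp [hIcc]
  obtain ⟨C, hC⟩ := (isCompact_univ_pi fun _ : Fin n => isCompact_Icc).exists_bound_of_continuousOn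
    hg.continuousOn
  refine (integrable_const C).mono' hg.aestronglyMeasurable ?_
  have hae : ∀ᵐ y ∂π, y ∈ A := by
    rw [ae_iff]
    exact hAfull
  filter_upwards [hae] with y hy using hC y hy

lemma integral_comp_perm {n : ℕ} (μ : Measure ℝ) [IsFiniteMeasure μ]
    (g : (Fin n → ℝ) → ℝ) (σ : Equiv.Perm (Fin n)) :
    ∫ y, g (y ∘ σ) ∂(Measure.pi fun _ : Fin n => μ)
      = ∫ y, g y ∂(Measure.pi fun _ : Fin n => μ) := by
  have h := (MeasureTheory.measurePreserving_piCongrLeft (fun _ : Fin n => μ) σ⁻¹).integral_comp'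
    (f := MeasurableEquiv.piCongrLeft (fun _ : Fin n => ℝ) σ⁻¹) g
  have happ : ∀ y : Fin n → ℝ,
      (MeasurableEquiv.piCongrLeft (fun _ : Fin n => ℝ) σ⁻¹) y = y ∘ σ := by
    intro y; funext j
    show (Equiv.piCongrLeft (fun _ : Fin n => ℝ) σ⁻¹) y j = y (σ j)
    have h2 := Equiv.piCongrLeft_apply_apply (P := fun _ : Fin n => ℝ)
      (e := (σ⁻¹ : Fin n ≃ Fin n)) y (σ j)
    simpa using h2
  simp_rw [happ] at h
  exact h

lemma exists_support_points (k : ℕ) (μ : Measure ℝ) [IsFiniteMeasure μ]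
    (hnotfin : ∀ s : Finset ℝ, s.card ≤ k → μ (↑s : Set ℝ)ᶜ ≠ 0) :
    ∃ x : Fin (k + 1) → ℝ, StrictMono x ∧
      ∀ i, ∀ ε > 0, 0 < μ (Metric.ball (x i) ε) := by
  set K : Set ℝ := {x : ℝ | ∀ ε > 0, 0 < μ (Metric.ball x ε)} with hK
  have hK0 : μ Kᶜ = 0 := by
    refine measure_null_of_locally_null _ fun x hx => ?_
    simp only [hK, Set.mem_compl_iff, Set.mem_setOf_eq, not_forall] at hx
    obtain ⟨ε, hε, hball⟩ := hx
    refine ⟨Metric.ball x ε, ?_, ?_⟩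
    · exact mem_nhdsWithin_of_mem_nhds (Metric.ball_mem_nhds x hε)
    · simpa using hball
  have ht : ∃ t : Finset ℝ, ↑t ⊆ K ∧ t.card = k + 1 := by
    by_contra h
    push_neg at h
    have hfin : K.Finite := by
      by_contra hinf
      obtain ⟨t, hsub, hcard⟩ := (Set.Infinite.exists_subset_card_eq hinf (k+1))
      exact h t hsub hcard
    have hle : hfin.toFinset.card ≤ k := by
      by_contra hgt
      push_neg at hgt
      obtain ⟨t, hsub, hcard⟩ := Finset.exists_subset_card_eq hgt
      exact h t (fun z hz => hfin.mem_toFinset.mp (hsub hz)) hcard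
    refine hnotfin hfin.toFinset hle ?_
    have : (↑hfin.toFinset : Set ℝ) = K := hfin.coe_toFinset
    rw [this]
    exact hK0
  obtain ⟨t, htK, htc⟩ := ht
  refine ⟨fun i => (t.orderIsoOfFin htc i : ℝ), ?_, ?_⟩
  · intro i j hij
    exact_mod_cast (t.orderIsoOfFin htc).strictMono hij
  · intro i
    exact htK (t.orderIsoOfFin htc i).2

lemma Vd_sq_pos (k : ℕ) (a b : ℝ) (μ : Measure ℝ) [IsFiniteMeasure μ]
    (hsupp : μ (Set.Icc a b)ᶜ = 0)
    (hx : ∃ x : Fin (k + 1) → ℝ, StrictMono x ∧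
      ∀ i, ∀ ε > 0, 0 < μ (Metric.ball (x i) ε)) :
    0 < ∫ y, (Vd (k + 1) y) ^ 2 ∂(Measure.pi fun _ : Fin (k + 1) => μ) := by
  obtain ⟨x, hxm, hxb⟩ := hx
  set π := Measure.pi fun _ : Fin (k + 1) => μ with hπ
  obtain ⟨ε, hε, hsep⟩ : ∃ ε : ℝ, 0 < ε ∧ ∀ i j : Fin (k + 1), i < j → 3 * ε ≤ x j - x i := by
    set s := Finset.univ.filter (fun p : Fin (k + 1) × Fin (k + 1) => p.1 < p.2) with hs
    by_cases hne : s.Nonempty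
    · refine ⟨s.inf' hne (fun p => x p.2 - x p.1) / 3, ?_, ?_⟩
      · have : ∀ p ∈ s, 0 < x p.2 - x p.1 := by
          intro p hp
          simp only [hs, Finset.mem_filter] at hp
          exact sub_pos.mpr (hxm hp.2)
        have h0 := (Finset.lt_inf'_iff (a := (0:ℝ)) hne).mpr this
        linarith
      · intro i j hij
        have hmem : (i, j) ∈ s := by simp [hs, hij]
        have := Finset.inf'_le (fun p => x p.2 - x p.1) hmem
        linarith
    · refine ⟨1, one_pos, fun i j hij => absurd ?_ hne⟩
      exact ⟨(i, j), by simp [hs, hij]⟩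
  set A : Set (Fin (k + 1) → ℝ) := Set.pi Set.univ fun i => Metric.ball (x i) ε with hA
  have hAmeas : MeasurableSet A := MeasurableSet.univ_pi fun i => measurableSet_ball
  have hπA : π A = ∏ i, μ (Metric.ball (x i) ε) := by rw [hA, Measure.pi_pi]
  have hA0 : π A ≠ 0 := by
    rw [hπA]
    rw [Finset.prod_ne_zero_iff]
    exact fun i _ => (hxb i ε hε).ne'
  have hAtop : π A ≠ ⊤ := measure_ne_top _ _
  set c : ℝ := ∏ i : Fin (k + 1), ∏ j ∈ Finset.Ioi i, ε with hc
  have hcpos : 0 < c := Finset.prod_pos fun i _ => Finset.prod_pos fun j _ => hε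
  have hlow : ∀ y ∈ A, c ^ 2 ≤ (Vd (k + 1) y) ^ 2 := by
    intro y hy
    have hbound : ∀ i j : Fin (k + 1), i < j → ε ≤ y j - y i := by
      intro i j hij
      have hyi := hy i (Set.mem_univ i)
      have hyj := hy j (Set.mem_univ j)
      rw [Metric.mem_ball, Real.dist_eq, abs_lt] at hyi hyj
      have := hsep i j hij
      linarith [hyi.1, hyi.2, hyj.1, hyj.2]
    have hVd : c ≤ Vd (k + 1) y := by
      rw [Vd, Matrix.det_vandermonde, hc]
      refine Finset.prod_le_prod (fun i _ => Finset.prod_nonneg fun j _ => hε.le)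
        (fun i _ => ?_)
      refine Finset.prod_le_prod (fun j _ => hε.le) (fun j hj => ?_)
      exact hbound i j (Finset.mem_Ioi.mp hj)
    exact pow_le_pow_left₀ hcpos.le hVd 2
  have hint : Integrable (fun y => (Vd (k + 1) y) ^ 2) π :=
    integrable_of_cont a b μ hsupp _ ((Vd_cont (k + 1)).pow 2)
  have h1 : c ^ 2 * (π A).toReal ≤ ∫ y in A, (Vd (k + 1) y) ^ 2 ∂π :=
    setIntegral_ge_of_const_le_real hAmeas hAtop hlow hint.integrableOn
  have h2 : ∫ y in A, (Vd (k + 1) y) ^ 2 ∂π ≤ ∫ y, (Vd (k + 1) y) ^ 2 ∂π :=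
    setIntegral_le_integral hint (Filter.Eventually.of_forall fun y => sq_nonneg _)
  have h3 : 0 < c ^ 2 * (π A).toReal := by
    apply mul_pos (pow_pos hcpos 2)
    exact ENNReal.toReal_pos hA0 hAtop
  linarith

theorem vandermonde_integral_pos (k : ℕ) (a b : ℝ) (hab : a ≤ b)
    (μ : Measure ℝ) [IsFiniteMeasure μ]
    (hsupp : μ (Set.Icc a b)ᶜ = 0)
    (hnotfin : ∀ s : Finset ℝ, s.card ≤ k → μ (↑s : Set ℝ)ᶜ ≠ 0) :
    0 < ∫ y : Fin (k + 1) → ℝ,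
        (∏ i : Fin (k + 1), y i ^ (i : ℕ)) *
          ∏ p ∈ Finset.univ.filter (fun p : Fin (k + 1) × Fin (k + 1) => p.1 < p.2),
            (y p.2 - y p.1)
        ∂(Measure.pi fun _ => μ) := by
  set π := Measure.pi fun _ : Fin (k + 1) => μ with hπ
  set F : (Fin (k + 1) → ℝ) → ℝ := fun y => (∏ i, y i ^ (i : ℕ)) * Vd (k + 1) y with hF
  have hgoal : (∫ y : Fin (k + 1) → ℝ,
      (∏ i : Fin (k + 1), y i ^ (i : ℕ)) *
        ∏ p ∈ Finset.univ.filter (fun p : Fin (k + 1) × Fin (k + 1) => p.1 < p.2),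
          (y p.2 - y p.1) ∂π) = ∫ y, F y ∂π := by
    congr 1
    funext y
    rw [hF, prod_pairs_eq]
  rw [hgoal]
  have hFcont : Continuous F := by
    apply Continuous.mul ?_ (Vd_cont (k + 1))
    fun_prop
  have hintσ : ∀ σ : Equiv.Perm (Fin (k + 1)), Integrable (fun y => F (y ∘ σ)) π := by
    intro σ
    exact integrable_of_cont a b μ hsupp _
      (hFcont.comp (continuous_pi fun i => continuous_apply (σ i)))
  have hsum : ∑ σ : Equiv.Perm (Fin (k + 1)), ∫ y, F (y ∘ σ) ∂π
      = ∫ y, ∑ σ : Equiv.Perm (Fin (k + 1)), F (y ∘ σ) ∂π :=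
    (integral_finset_sum _ fun σ _ => hintσ σ).symm
  have heq : (∫ y, ∑ σ : Equiv.Perm (Fin (k + 1)), F (y ∘ σ) ∂π)
      = ∫ y, (Vd (k + 1) y) ^ 2 ∂π := by
    congr 1
    funext y
    exact sym_sum (k + 1) y
  have hcard : ∑ σ : Equiv.Perm (Fin (k + 1)), ∫ y, F (y ∘ σ) ∂π
      = (Fintype.card (Equiv.Perm (Fin (k + 1))) : ℝ) * ∫ y, F y ∂π := by
    have : ∀ σ : Equiv.Perm (Fin (k + 1)), ∫ y, F (y ∘ σ) ∂π = ∫ y, F y ∂π :=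
      integral_comp_perm μ F
    rw [Finset.sum_congr rfl fun σ _ => this σ, Finset.sum_const, nsmul_eq_mul]
    simp
  have hpos : 0 < (Fintype.card (Equiv.Perm (Fin (k + 1))) : ℝ) * ∫ y, F y ∂π := by
    rw [← hcard, hsum, heq]
    exact Vd_sq_pos k a b μ hsupp (exists_support_points k μ hnotfin)
  have hc : 0 < (Fintype.card (Equiv.Perm (Fin (k + 1))) : ℝ) := by
    exact_mod_cast Fintype.card_pos
  rcases mul_pos_iff.mp hpos with ⟨_, h⟩ | ⟨h, _⟩
  · exact h
  · linarith
end

section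
/- For the pattern τ = 1^k 0^l (k ones followed by l zeros), the maximum of ρ_τ(f) = (k+l)! ∫_{x_1<…<x_{k+l}} ∏_{i≤k} f(x_i) ∏_{i>k}(1−f(x_i)) dx over measurable f : [0,1] → [0,1] with ∫f = ρ equals C(k+l, k) · ρ^k (1−ρ)^l, attained by the indicator function of [0, ρ]. -/
open MeasureTheory

namespace RhoAux

open Set

variable {n : ℕ}

/-- The unit box. -/
def box (n : ℕ) : Set (Fin n → ℝ) := {x | ∀ i, x i ∈ Icc (0:ℝ) 1}

/-- The simplex associated to a permutation. -/
def Spl (n : ℕ) (σ : Equiv.Perm (Fin n)) : Set (Fin n → ℝ) :=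
  {x | StrictMono (x ∘ σ) ∧ ∀ i, x i ∈ Icc (0:ℝ) 1}

lemma measurableSet_sm (n : ℕ) : MeasurableSet {y : Fin n → ℝ | StrictMono y} := by
  have h : {y : Fin n → ℝ | StrictMono y}
      = ⋂ (p : Fin n × Fin n), ⋂ (_ : p.1 < p.2), {y : Fin n → ℝ | y p.1 < y p.2} := by
    ext y
    simp only [Set.mem_iInter, Set.mem_setOf_eq, Prod.forall]
    exact ⟨fun h i j hij => h hij, fun h i j hij => h i j hij⟩
  rw [h]
  exact MeasurableSet.iInter fun p => MeasurableSet.iInter fun _ =>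
    measurableSet_lt (measurable_pi_apply _) (measurable_pi_apply _)

lemma measurableSet_box (n : ℕ) : MeasurableSet (box n) := by
  have : box n = ⋂ i, (fun x : Fin n → ℝ => x i) ⁻¹' Icc (0:ℝ) 1 := by
    ext x; simp [box]
  rw [this]
  exact MeasurableSet.iInter fun i => (measurable_pi_apply i) measurableSet_Icc

lemma measurableSet_Spl (n : ℕ) (σ : Equiv.Perm (Fin n)) : MeasurableSet (Spl n σ) := by
  have : Spl n σ = ((fun x : Fin n → ℝ => x ∘ σ) ⁻¹' {y | StrictMono y}) ∩ box n := rfl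
  rw [this]
  exact ((measurable_pi_lambda _ fun a => measurable_pi_apply _) (measurableSet_sm n)).inter
    (measurableSet_box n)

lemma Spl_subset_box (σ : Equiv.Perm (Fin n)) : Spl n σ ⊆ box n := fun _ hx => hx.2

lemma volume_box (n : ℕ) : volume (box n) = 1 := by
  have : box n = Set.pi Set.univ (fun _ : Fin n => Icc (0:ℝ) 1) := by
    ext x
    simp only [box, Set.mem_setOf_eq, Set.mem_pi, Set.mem_univ, forall_true_left, Set.mem_Icc]
  rw [this, volume_pi_pi]
  simp [Real.volume_Icc]

lemma integrableOn_of_le_box {G : (Fin n → ℝ) → ℝ} (hG : Measurable G)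
    (hb : ∀ x, |G x| ≤ 1) {s : Set (Fin n → ℝ)} (hs : s ⊆ box n) :
    IntegrableOn G s := by
  apply Measure.integrableOn_of_bounded (M := 1)
  · exact ne_of_lt (lt_of_le_of_lt (measure_mono hs) (by rw [volume_box]; exact ENNReal.one_lt_top))
  · exact hG.aestronglyMeasurable
  · exact Filter.Eventually.of_forall fun x => by simpa using hb x

/-- Key symmetrization lemma: the integral of a symmetric product over the ordered
simplex equals `(∫ g)^n / n!`. -/
lemma integral_simplex (n : ℕ) (g : ℝ → ℝ) (hg : Measurable g)
    (h0 : ∀ x, 0 ≤ g x) (h1 : ∀ x, g x ≤ 1) :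
    ∫ x in Spl n 1, ∏ i, g (x i)
      = (∫ t in Icc (0:ℝ) 1, g t) ^ n / (n.factorial : ℝ) := by
  set G : (Fin n → ℝ) → ℝ := fun x => ∏ i, g (x i) with hGdef
  have hGmeas : Measurable G := Finset.measurable_prod _ fun i _ =>
    hg.comp (measurable_pi_apply i)
  have hGb : ∀ x, |G x| ≤ 1 := by
    intro x
    rw [abs_of_nonneg (Finset.prod_nonneg fun i _ => h0 _)]
    exact Finset.prod_le_one (fun i _ => h0 _) (fun i _ => h1 _)
  -- all simplex integrals are equal
  have key : ∀ σ : Equiv.Perm (Fin n), ∫ x in Spl n σ, G x = ∫ x in Spl n 1, G x := by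
    have main : ∀ σ : Equiv.Perm (Fin n), ∫ x in Spl n σ.symm, G x = ∫ x in Spl n 1, G x := by
      intro σ
      let e : (Fin n → ℝ) ≃ᵐ (Fin n → ℝ) :=
        MeasurableEquiv.piCongrLeft (fun _ => ℝ) (σ : Fin n ≃ Fin n)
      have hmp : MeasurePreserving e volume volume :=
        volume_measurePreserving_piCongrLeft (fun _ => ℝ) σ
      have happ : ∀ (x : Fin n → ℝ) (i : Fin n), e x (σ i) = x i := by
        intro x i
        show (Equiv.piCongrLeft (fun _ => ℝ) (σ : Fin n ≃ Fin n)) x (σ i) = x i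
        exact Equiv.piCongrLeft_apply_apply _ _ _ _
      have happ' : ∀ (x : Fin n → ℝ) (j : Fin n), e x j = x (σ.symm j) := by
        intro x j
        have := happ x (σ.symm j)
        rwa [Equiv.apply_symm_apply] at this
      have hpre : e ⁻¹' Spl n 1 = Spl n σ.symm := by
        ext x
        have hxe : (e x : Fin n → ℝ) = x ∘ ⇑σ.symm := funext (happ' x)
        simp only [Set.mem_preimage, Spl, Set.mem_setOf_eq, Equiv.Perm.coe_one,
          Function.comp_id, hxe, Function.comp_apply]
        refine and_congr Iff.rfl ⟨fun h i => ?_, fun h i => h _⟩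
        have := h (σ i)
        rwa [Equiv.symm_apply_apply] at this
      have := hmp.setIntegral_preimage_emb e.measurableEmbedding G (Spl n 1)
      rw [hpre] at this
      rw [← this]
      apply setIntegral_congr_fun (measurableSet_Spl n σ.symm)
      intro x _
      show G x = G (e x)
      simp only [hGdef]
      calc ∏ i, g (x i) = ∏ i, g (e x (σ i)) := by simp only [happ]
        _ = ∏ i, g (e x i) := Equiv.prod_comp σ fun j => g (e x j)
    intro σ
    have := main σ.symm
    rwa [Equiv.symm_symm] at this
  -- the simplices are pairwise disjoint
  have hdisj : Pairwise (Function.onFun Disjoint fun σ : Equiv.Perm (Fin n) => Spl n σ) := by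
    intro σ τ hne
    rw [Function.onFun, Set.disjoint_left]
    rintro x ⟨hmσ, hbox⟩ ⟨hmτ, -⟩
    apply hne
    have hinj : Function.Injective x := by
      have : Function.Injective (x ∘ σ) := hmσ.injective
      have h2 : x = (x ∘ σ) ∘ σ.symm := by
        funext i; simp
      rw [h2]
      exact this.comp σ.symm.injective
    have hrange : Set.range (x ∘ σ) = Set.range (x ∘ τ) := by
      rw [Set.range_comp, Set.range_comp]
      simp [Set.range_eq_univ.mpr σ.surjective, Set.range_eq_univ.mpr τ.surjective]
    haveI : WellFoundedLT (Fin n) := inferInstance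
    have heq : x ∘ ⇑σ = x ∘ ⇑τ := (hmσ.range_inj hmτ).mp hrange
    exact Equiv.ext fun i => hinj (congrFun heq i)
  -- the complement of the union in the box is null
  have hnull : volume (box n \ ⋃ σ : Equiv.Perm (Fin n), Spl n σ) = 0 := by
    have hsub : box n \ (⋃ σ : Equiv.Perm (Fin n), Spl n σ)
        ⊆ ⋃ p : {p : Fin n × Fin n // p.1 ≠ p.2}, {x : Fin n → ℝ | x p.1.1 = x p.1.2} := by
      rintro x ⟨hxbox, hxU⟩
      by_contra hN
      simp only [Set.mem_iUnion, Set.mem_setOf_eq, not_exists, Subtype.forall] at hN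
      have hinj : Function.Injective x := by
        intro i j hij
        by_contra hne
        exact hN ⟨i, j⟩ hne hij
      apply hxU
      refine Set.mem_iUnion.mpr ⟨Tuple.sort x, ?_, hxbox⟩
      exact (Tuple.monotone_sort x).strictMono_of_injective
        (hinj.comp (Tuple.sort x).injective)
    refine measure_mono_null hsub (measure_iUnion_null fun p => ?_)
    obtain ⟨⟨i, j⟩, hij⟩ := p
    have hset : {x : Fin n → ℝ | x i = x j}
        = (LinearMap.ker ((LinearMap.proj i : (Fin n → ℝ) →ₗ[ℝ] ℝ) - LinearMap.proj j) :
            Submodule ℝ (Fin n → ℝ)) := by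
      ext x
      simp [LinearMap.mem_ker, sub_eq_zero]
    rw [hset]
    apply Measure.addHaar_submodule
    intro htop
    have hmem : Pi.single i (1:ℝ) ∈
        (LinearMap.ker ((LinearMap.proj i : (Fin n → ℝ) →ₗ[ℝ] ℝ) - LinearMap.proj j)) := by
      rw [htop]; trivial
    simp only [LinearMap.mem_ker, LinearMap.sub_apply, LinearMap.proj_apply, sub_eq_zero] at hmem
    rw [Pi.single_eq_same, Pi.single_eq_of_ne (Ne.symm hij)] at hmem
    exact one_ne_zero hmem
  -- integrability
  have hint : ∀ σ : Equiv.Perm (Fin n), IntegrableOn G (Spl n σ) := fun σ =>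
    integrableOn_of_le_box hGmeas hGb (Spl_subset_box σ)
  -- decompose the box integral
  have hboxeq : ∫ x in box n, G x = ∑ σ : Equiv.Perm (Fin n), ∫ x in Spl n σ, G x := by
    have hae : box n =ᵐ[volume] ⋃ σ : Equiv.Perm (Fin n), Spl n σ := by
      rw [MeasureTheory.ae_eq_set]
      constructor
      · exact hnull
      · rw [Set.diff_eq_empty.mpr (Set.iUnion_subset fun σ => Spl_subset_box σ)]
        exact measure_empty
    rw [setIntegral_congr_set hae]
    exact integral_iUnion_fintype (fun σ => measurableSet_Spl n σ) hdisj hint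
  -- the box integral is the power of the 1-d integral
  have hboxval : ∫ x in box n, G x = (∫ t in Icc (0:ℝ) 1, g t) ^ n := by
    have hindeq : (box n).indicator G = fun x => ∏ i, ((Icc (0:ℝ) 1).indicator g) (x i) := by
      funext x
      by_cases hx : x ∈ box n
      · rw [Set.indicator_of_mem hx]
        exact Finset.prod_congr rfl fun i _ => (Set.indicator_of_mem (hx i) g).symm
      · rw [Set.indicator_of_notMem hx]
        symm
        simp only [box, Set.mem_setOf_eq, not_forall] at hx
        obtain ⟨i, hi⟩ := hx
        exact Finset.prod_eq_zero (Finset.mem_univ i) (Set.indicator_of_notMem hi g)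
    rw [← integral_indicator (measurableSet_box n), hindeq]
    simp only [volume_pi]
    rw [MeasureTheory.integral_fintype_prod_eq_pow (ι := Fin n) ((Icc (0:ℝ) 1).indicator g),
      integral_indicator measurableSet_Icc]
    simp
  -- combine
  have hsum : ∑ σ : Equiv.Perm (Fin n), ∫ x in Spl n σ, G x
      = (n.factorial : ℝ) * ∫ x in Spl n 1, G x := by
    rw [Finset.sum_congr rfl fun σ _ => key σ, Finset.sum_const, Finset.card_univ,
      Fintype.card_perm, Fintype.card_fin, nsmul_eq_mul]
  have hfac : (n.factorial : ℝ) ≠ 0 := Nat.cast_ne_zero.mpr n.factorial_ne_zero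
  have hfin : (n.factorial : ℝ) * ∫ x in Spl n 1, G x = (∫ t in Icc (0:ℝ) 1, g t) ^ n := by
    rw [← hsum, ← hboxeq, hboxval]
  rw [eq_div_iff hfac, mul_comm]
  exact hfin


/-- The "two ordered blocks" set. -/
def Tset (k l : ℕ) : Set (Fin (k + l) → ℝ) :=
  {x | StrictMono (fun a : Fin k => x (Fin.castAdd l a)) ∧
       StrictMono (fun b : Fin l => x (Fin.natAdd k b)) ∧ ∀ i, x i ∈ Icc (0:ℝ) 1}

lemma measurableSet_Tset (k l : ℕ) : MeasurableSet (Tset k l) := by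
  have : Tset k l = ((fun x : Fin (k + l) → ℝ => fun a : Fin k => x (Fin.castAdd l a)) ⁻¹'
        {y | StrictMono y})
      ∩ (((fun x : Fin (k + l) → ℝ => fun b : Fin l => x (Fin.natAdd k b)) ⁻¹'
        {y | StrictMono y}) ∩ box (k + l)) := rfl
  rw [this]
  refine MeasurableSet.inter ?_ (MeasurableSet.inter ?_ (measurableSet_box _)) <;>
    exact (measurable_pi_lambda _ fun a => measurable_pi_apply _) (measurableSet_sm _)

lemma Tset_subset_box (k l : ℕ) : Tset k l ⊆ box (k + l) := fun _ hx => hx.2.2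

lemma Spl_one_eq (n : ℕ) :
    Spl n 1 = {x : Fin n → ℝ | StrictMono x ∧ ∀ i, x i ∈ Icc (0:ℝ) 1} := by
  ext x
  simp [Spl, Equiv.Perm.coe_one, Function.comp_id]

lemma Spl_subset_Tset (k l : ℕ) : Spl (k + l) 1 ⊆ Tset k l := by
  rintro x ⟨hm, hbox⟩
  have hm' : StrictMono x := by
    have : x ∘ ⇑(1 : Equiv.Perm (Fin (k + l))) = x := by
      funext i; simp
    rwa [this] at hm
  exact ⟨hm'.comp (Fin.strictMono_castAdd l), hm'.comp (Fin.strictMono_natAdd k), hbox⟩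

/-- The measurable equivalence splitting `Fin (k+l) → ℝ` into two blocks. -/
noncomputable def Esplit (k l : ℕ) : ((Fin k → ℝ) × (Fin l → ℝ)) ≃ᵐ (Fin (k + l) → ℝ) :=
  (MeasurableEquiv.sumPiEquivProdPi (fun _ : Fin k ⊕ Fin l => ℝ)).symm.trans
    (MeasurableEquiv.piCongrLeft (fun _ : Fin (k + l) => ℝ) finSumFinEquiv)

lemma Esplit_mp (k l : ℕ) : MeasurePreserving (⇑(Esplit k l)) volume volume := by
  have h1 := volume_measurePreserving_sumPiEquivProdPi_symm (fun _ : Fin k ⊕ Fin l => ℝ)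
  have h2 := volume_measurePreserving_piCongrLeft (fun _ : Fin (k + l) => ℝ) finSumFinEquiv
  have : ⇑(Esplit k l) = ⇑(MeasurableEquiv.piCongrLeft (fun _ : Fin (k + l) => ℝ) finSumFinEquiv)
      ∘ ⇑(MeasurableEquiv.sumPiEquivProdPi (fun _ : Fin k ⊕ Fin l => ℝ)).symm := rfl
  rw [this]
  exact h2.comp h1

lemma Esplit_apply_left (k l : ℕ) (p : (Fin k → ℝ) × (Fin l → ℝ)) (a : Fin k) :
    Esplit k l p (Fin.castAdd l a) = p.1 a := by
  show (Equiv.piCongrLeft (fun _ : Fin (k + l) => ℝ) finSumFinEquiv)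
    ((Equiv.sumPiEquivProdPi (fun _ : Fin k ⊕ Fin l => ℝ)).symm p) (Fin.castAdd l a) = p.1 a
  rw [← finSumFinEquiv_apply_left, Equiv.piCongrLeft_apply_apply]
  rfl

lemma Esplit_apply_right (k l : ℕ) (p : (Fin k → ℝ) × (Fin l → ℝ)) (b : Fin l) :
    Esplit k l p (Fin.natAdd k b) = p.2 b := by
  show (Equiv.piCongrLeft (fun _ : Fin (k + l) => ℝ) finSumFinEquiv)
    ((Equiv.sumPiEquivProdPi (fun _ : Fin k ⊕ Fin l => ℝ)).symm p) (Fin.natAdd k b) = p.2 b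
  rw [← finSumFinEquiv_apply_right, Equiv.piCongrLeft_apply_apply]
  rfl

lemma Esplit_preimage (k l : ℕ) : ⇑(Esplit k l) ⁻¹' (Tset k l) = (Spl k 1) ×ˢ (Spl l 1) := by
  ext ⟨y, z⟩
  have h1 : (fun a : Fin k => Esplit k l (y, z) (Fin.castAdd l a)) = y :=
    funext fun a => Esplit_apply_left k l (y, z) a
  have h2 : (fun b : Fin l => Esplit k l (y, z) (Fin.natAdd k b)) = z :=
    funext fun b => Esplit_apply_right k l (y, z) b
  simp only [Set.mem_preimage, Tset, Set.mem_setOf_eq, h1, h2, Set.mem_prod, Spl_one_eq]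
  constructor
  · rintro ⟨ha, hb, hbox⟩
    refine ⟨⟨ha, fun a => ?_⟩, ⟨hb, fun b => ?_⟩⟩
    · have := hbox (Fin.castAdd l a)
      rwa [Esplit_apply_left k l (y, z) a] at this
    · have := hbox (Fin.natAdd k b)
      rwa [Esplit_apply_right k l (y, z) b] at this
  · rintro ⟨⟨ha, hya⟩, ⟨hb, hzb⟩⟩
    refine ⟨ha, hb, fun i => ?_⟩
    refine Fin.addCases (fun a => ?_) (fun b => ?_) i
    · rw [Esplit_apply_left k l (y, z) a]; exact hya a
    · rw [Esplit_apply_right k l (y, z) b]; exact hzb b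

lemma prod_comp_Esplit (k l : ℕ) (f : ℝ → ℝ) (y : Fin k → ℝ) (z : Fin l → ℝ) :
    (∏ i : Fin (k + l),
        (if (i : ℕ) < k then f (Esplit k l (y, z) i) else 1 - f (Esplit k l (y, z) i)))
      = (∏ a : Fin k, f (y a)) * ∏ b : Fin l, (1 - f (z b)) := by
  rw [← Equiv.prod_comp finSumFinEquiv
    (fun i : Fin (k + l) =>
      (if (i : ℕ) < k then f (Esplit k l (y, z) i) else 1 - f (Esplit k l (y, z) i))),
    Fintype.prod_sum_type]
  congr 1
  · refine Finset.prod_congr rfl fun a _ => ?_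
    rw [finSumFinEquiv_apply_left, Esplit_apply_left]
    rw [if_pos]
    simpa using a.isLt
  · refine Finset.prod_congr rfl fun b _ => ?_
    rw [finSumFinEquiv_apply_right, Esplit_apply_right]
    rw [if_neg]
    simp

/-- Measurability of the pattern integrand. -/
lemma measurable_itg (k l : ℕ) (f : ℝ → ℝ) (hf : Measurable f) :
    Measurable (fun x : Fin (k + l) → ℝ =>
      ∏ i : Fin (k + l), (if (i : ℕ) < k then f (x i) else 1 - f (x i))) := by
  refine Finset.measurable_prod _ fun i _ => ?_
  by_cases h : (i : ℕ) < k
  · simp only [h, if_true]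
    exact hf.comp (measurable_pi_apply i)
  · simp only [h, if_false]
    exact measurable_const.sub (hf.comp (measurable_pi_apply i))

lemma itg_nonneg (k l : ℕ) (f : ℝ → ℝ) (h01 : ∀ x, f x ∈ Icc (0:ℝ) 1) (x : Fin (k + l) → ℝ) :
    0 ≤ ∏ i : Fin (k + l), (if (i : ℕ) < k then f (x i) else 1 - f (x i)) := by
  refine Finset.prod_nonneg fun i _ => ?_
  by_cases h : (i : ℕ) < k <;> simp only [h, if_true, if_false]
  · exact (h01 _).1
  · linarith [(h01 (x i)).2]

lemma itg_le_one (k l : ℕ) (f : ℝ → ℝ) (h01 : ∀ x, f x ∈ Icc (0:ℝ) 1) (x : Fin (k + l) → ℝ) :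
    ∏ i : Fin (k + l), (if (i : ℕ) < k then f (x i) else 1 - f (x i)) ≤ 1 := by
  refine Finset.prod_le_one (fun i _ => ?_) (fun i _ => ?_)
  · by_cases h : (i : ℕ) < k <;> simp only [h, if_true, if_false]
    · exact (h01 _).1
    · linarith [(h01 (x i)).2]
  · by_cases h : (i : ℕ) < k <;> simp only [h, if_true, if_false]
    · exact (h01 _).2
    · linarith [(h01 (x i)).1]

lemma itg_abs_le_one (k l : ℕ) (f : ℝ → ℝ) (h01 : ∀ x, f x ∈ Icc (0:ℝ) 1) (x : Fin (k + l) → ℝ) :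
    |∏ i : Fin (k + l), (if (i : ℕ) < k then f (x i) else 1 - f (x i))| ≤ 1 := by
  rw [abs_of_nonneg (itg_nonneg k l f h01 x)]
  exact itg_le_one k l f h01 x

/-- The integral over `Tset` splits as a product. -/
lemma integral_Tset (k l : ℕ) (f : ℝ → ℝ) (hf : Measurable f) (h01 : ∀ x, f x ∈ Icc (0:ℝ) 1) :
    ∫ x in Tset k l, ∏ i : Fin (k + l), (if (i : ℕ) < k then f (x i) else 1 - f (x i))
      = ((∫ t in Icc (0:ℝ) 1, f t) ^ k / (k.factorial : ℝ))
        * ((∫ t in Icc (0:ℝ) 1, (1 - f t)) ^ l / (l.factorial : ℝ)) := by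
  rw [← (Esplit_mp k l).setIntegral_preimage_emb (Esplit k l).measurableEmbedding _ (Tset k l),
    Esplit_preimage]
  have hcongr : ∫ p in (Spl k 1) ×ˢ (Spl l 1),
      (∏ i : Fin (k + l), (if (i : ℕ) < k then f (Esplit k l p i) else 1 - f (Esplit k l p i)))
      = ∫ p in (Spl k 1) ×ˢ (Spl l 1),
        (fun y : Fin k → ℝ => ∏ a, f (y a)) p.1 * (fun z : Fin l → ℝ => ∏ b, (1 - f (z b))) p.2 := by
    refine setIntegral_congr_fun ((measurableSet_Spl k 1).prod (measurableSet_Spl l 1))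
      fun p _ => ?_
    obtain ⟨y, z⟩ := p
    exact prod_comp_Esplit k l f y z
  rw [hcongr]
  have hprod := setIntegral_prod_mul (L := ℝ) (μ := (volume : Measure (Fin k → ℝ)))
      (ν := (volume : Measure (Fin l → ℝ)))
      (fun y : Fin k → ℝ => ∏ a, f (y a)) (fun z : Fin l → ℝ => ∏ b, (1 - f (z b)))
      (Spl k 1) (Spl l 1)
  rw [← Measure.volume_eq_prod] at hprod
  rw [hprod]
  rw [integral_simplex k f hf (fun x => (h01 x).1) (fun x => (h01 x).2),
    integral_simplex l (fun t => 1 - f t) (measurable_const.sub hf)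
      (fun x => by show (0:ℝ) ≤ 1 - f x; linarith [(h01 x).2])
      (fun x => by show (1:ℝ) - f x ≤ 1; linarith [(h01 x).1])]

lemma fact_arith (k l : ℕ) (A B : ℝ) :
    ((k + l).factorial : ℝ) * (A ^ k / (k.factorial : ℝ) * (B ^ l / (l.factorial : ℝ)))
      = ((k + l).choose k : ℝ) * A ^ k * B ^ l := by
  have h : ((k + l).choose k * k.factorial * l.factorial : ℕ) = (k + l).factorial := by
    have := Nat.choose_mul_factorial_mul_factorial (Nat.le_add_right k l)
    simpa [Nat.add_sub_cancel_left] using this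
  have h' : ((k + l).factorial : ℝ)
      = ((k + l).choose k : ℝ) * (k.factorial : ℝ) * (l.factorial : ℝ) := by
    exact_mod_cast h.symm
  have hk : (k.factorial : ℝ) ≠ 0 := Nat.cast_ne_zero.mpr k.factorial_ne_zero
  have hl : (l.factorial : ℝ) ≠ 0 := Nat.cast_ne_zero.mpr l.factorial_ne_zero
  rw [h']
  field_simp

end RhoAux

open RhoAux Set

/-- The density of the pattern `1^k 0^l` in a sublebesgue density `f`:
`(k+l)!` times the integral over the ordered simplex `0 ≤ x₁ < ⋯ < x_{k+l} ≤ 1`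
of `∏_{i≤k} f(x_i) ∏_{i>k} (1 - f(x_i))`. -/
noncomputable def rhoOneKZeroL (k l : ℕ) (f : ℝ → ℝ) : ℝ :=
  (Nat.factorial (k + l)) *
    ∫ x in {x : Fin (k + l) → ℝ | StrictMono x ∧ ∀ i, x i ∈ Set.Icc (0:ℝ) 1},
      ∏ i : Fin (k + l), (if (i : ℕ) < k then f (x i) else 1 - f (x i))


open RhoAux in
lemma rhoOneKZeroL_eq (k l : ℕ) (f : ℝ → ℝ) :
    rhoOneKZeroL k l f = ((k + l).factorial : ℝ) *
      ∫ x in Spl (k + l) 1,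
        ∏ i : Fin (k + l), (if (i : ℕ) < k then f (x i) else 1 - f (x i)) := by
  rw [rhoOneKZeroL, Spl_one_eq]

open RhoAux in
lemma integral_one_sub_aux (f : ℝ → ℝ) (hf : Measurable f) (h01 : ∀ x, f x ∈ Set.Icc (0:ℝ) 1) :
    ∫ t in Set.Icc (0:ℝ) 1, (1 - f t) = 1 - ∫ t in Set.Icc (0:ℝ) 1, f t := by
  have hvol : volume (Set.Icc (0:ℝ) 1) < ⊤ := by
    simp [Real.volume_Icc]
  have hint : IntegrableOn f (Set.Icc (0:ℝ) 1) := by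
    apply Measure.integrableOn_of_bounded (M := 1) hvol.ne hf.aestronglyMeasurable
    refine Filter.Eventually.of_forall fun x => ?_
    rw [Real.norm_eq_abs, abs_le]
    exact ⟨by linarith [(h01 x).1], (h01 x).2⟩
  have hconst : IntegrableOn (fun _ : ℝ => (1:ℝ)) (Set.Icc (0:ℝ) 1) :=
    integrableOn_const hvol.ne
  rw [integral_sub hconst hint, setIntegral_const]
  simp [Real.volume_Icc]

open RhoAux in
lemma rho_le_aux (k l : ℕ) (f : ℝ → ℝ) (hf : Measurable f)
    (h01 : ∀ x, f x ∈ Set.Icc (0:ℝ) 1) :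
    rhoOneKZeroL k l f ≤ ((k + l).choose k : ℝ) * (∫ t in Set.Icc (0:ℝ) 1, f t) ^ k
      * (∫ t in Set.Icc (0:ℝ) 1, (1 - f t)) ^ l := by
  rw [rhoOneKZeroL_eq, ← fact_arith k l, ← integral_Tset k l f hf h01]
  refine mul_le_mul_of_nonneg_left ?_ (Nat.cast_nonneg _)
  refine setIntegral_mono_set ?_ ?_ ?_
  · exact integrableOn_of_le_box (measurable_itg k l f hf) (itg_abs_le_one k l f h01)
      (Tset_subset_box k l)
  · exact Filter.Eventually.of_forall (itg_nonneg k l f h01)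
  · exact (Spl_subset_Tset k l).eventuallyLE

open RhoAux in
lemma rho_indicator_aux (k l : ℕ) (ρ : ℝ) (hρ0 : 0 ≤ ρ) (hρ1 : ρ ≤ 1) :
    rhoOneKZeroL k l (Set.indicator (Set.Icc 0 ρ) fun _ => (1:ℝ))
      = ((k + l).choose k : ℝ) * ρ ^ k * (1 - ρ) ^ l := by
  set f₀ : ℝ → ℝ := Set.indicator (Set.Icc 0 ρ) fun _ => (1:ℝ) with hf₀def
  have hm₀ : Measurable f₀ := measurable_const.indicator measurableSet_Icc
  have h01₀ : ∀ x, f₀ x ∈ Set.Icc (0:ℝ) 1 := by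
    intro x
    by_cases h : x ∈ Set.Icc (0:ℝ) ρ <;>
      simp [hf₀def, Set.indicator_of_mem, Set.indicator_of_notMem, h]
  have hIcc₀ : ∫ t in Set.Icc (0:ℝ) 1, f₀ t = ρ := by
    rw [hf₀def, setIntegral_indicator measurableSet_Icc,
      Set.inter_eq_right.mpr (Set.Icc_subset_Icc_right hρ1), setIntegral_const]
    simp [Real.volume_Icc, ENNReal.toReal_ofReal hρ0, hρ0]
  -- the integrand vanishes on `Tset \ simplex`
  have key : ∀ x ∈ Tset k l,
      (∏ i : Fin (k + l), (if (i : ℕ) < k then f₀ (x i) else 1 - f₀ (x i))) ≠ 0 →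
      StrictMono x := by
    intro x hxT hne
    have hfac : ∀ i : Fin (k + l),
        (if (i : ℕ) < k then f₀ (x i) else 1 - f₀ (x i)) ≠ 0 :=
      fun i => Finset.prod_ne_zero_iff.mp hne i (Finset.mem_univ i)
    have hlow : ∀ i : Fin (k + l), (i : ℕ) < k → x i ∈ Set.Icc (0:ℝ) ρ := by
      intro i hi
      by_contra h
      have h2 := hfac i
      rw [if_pos hi] at h2
      exact h2 (Set.indicator_of_notMem h _)
    have hhigh : ∀ i : Fin (k + l), ¬ (i : ℕ) < k → ρ < x i := by
      intro i hi
      by_contra h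
      push_neg at h
      have hxi : x i ∈ Set.Icc (0:ℝ) ρ := ⟨(hxT.2.2 i).1, h⟩
      have h2 := hfac i
      rw [if_neg hi, hf₀def, Set.indicator_of_mem hxi] at h2
      simp at h2
    intro i j hij
    have hijn : (i : ℕ) < (j : ℕ) := hij
    by_cases hj : (j : ℕ) < k
    · have hi : (i : ℕ) < k := hijn.trans hj
      have hlt : (⟨(i : ℕ), hi⟩ : Fin k) < ⟨(j : ℕ), hj⟩ := hijn
      have hxx : x (Fin.castAdd l ⟨(i : ℕ), hi⟩) < x (Fin.castAdd l ⟨(j : ℕ), hj⟩) :=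
        hxT.1 hlt
      have e1 : Fin.castAdd l (⟨(i : ℕ), hi⟩ : Fin k) = i := by ext; simp
      have e2 : Fin.castAdd l (⟨(j : ℕ), hj⟩ : Fin k) = j := by ext; simp
      rwa [e1, e2] at hxx
    · by_cases hi : (i : ℕ) < k
      · exact lt_of_le_of_lt (hlow i hi).2 (hhigh j hj)
      · have hiKL : (i : ℕ) < k + l := i.isLt
        have hjKL : (j : ℕ) < k + l := j.isLt
        have hi' : (i : ℕ) - k < l := by omega
        have hj' : (j : ℕ) - k < l := by omega
        have hlt : (⟨(i : ℕ) - k, hi'⟩ : Fin l) < ⟨(j : ℕ) - k, hj'⟩ := by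
          show (i : ℕ) - k < (j : ℕ) - k
          omega
        have hxx : x (Fin.natAdd k ⟨(i : ℕ) - k, hi'⟩) < x (Fin.natAdd k ⟨(j : ℕ) - k, hj'⟩) :=
          hxT.2.1 hlt
        have e1 : Fin.natAdd k (⟨(i : ℕ) - k, hi'⟩ : Fin l) = i := by
          ext
          simp only [Fin.coe_natAdd]
          omega
        have e2 : Fin.natAdd k (⟨(j : ℕ) - k, hj'⟩ : Fin l) = j := by
          ext
          simp only [Fin.coe_natAdd]
          omega
        rwa [e1, e2] at hxx
  set G₀ : (Fin (k + l) → ℝ) → ℝ :=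
    fun x => ∏ i : Fin (k + l), (if (i : ℕ) < k then f₀ (x i) else 1 - f₀ (x i)) with hG₀def
  have hind : (Tset k l).indicator G₀ = (Spl (k + l) 1).indicator G₀ := by
    funext x
    by_cases hxS : x ∈ Spl (k + l) 1
    · rw [Set.indicator_of_mem (Spl_subset_Tset k l hxS), Set.indicator_of_mem hxS]
    · rw [Set.indicator_of_notMem hxS]
      by_cases hxT : x ∈ Tset k l
      · rw [Set.indicator_of_mem hxT]
        by_contra hne
        apply hxS
        rw [Spl_one_eq]
        exact ⟨key x hxT hne, hxT.2.2⟩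
      · rw [Set.indicator_of_notMem hxT]
  have hST : ∫ x in Spl (k + l) 1, G₀ x = ∫ x in Tset k l, G₀ x := by
    rw [← integral_indicator (measurableSet_Spl _ 1), ← hind,
      integral_indicator (measurableSet_Tset k l)]
  rw [rhoOneKZeroL_eq]
  calc ((k + l).factorial : ℝ) * ∫ x in Spl (k + l) 1, G₀ x
      = ((k + l).factorial : ℝ) * ∫ x in Tset k l, G₀ x := by rw [hST]
    _ = ((k + l).factorial : ℝ) * ((∫ t in Set.Icc (0:ℝ) 1, f₀ t) ^ k / (k.factorial : ℝ)
          * ((∫ t in Set.Icc (0:ℝ) 1, (1 - f₀ t)) ^ l / (l.factorial : ℝ))) := by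
        rw [integral_Tset k l f₀ hm₀ h01₀]
    _ = ((k + l).choose k : ℝ) * ρ ^ k * (1 - ρ) ^ l := by
        rw [integral_one_sub_aux f₀ hm₀ h01₀, hIcc₀, fact_arith]

theorem max_rho_oneK_zeroL (k l : ℕ) (ρ : ℝ) (hρ : ρ ∈ Set.Icc (0:ℝ) 1) :
    IsGreatest
      {r : ℝ | ∃ f : ℝ → ℝ, Measurable f ∧ (∀ x, f x ∈ Set.Icc (0:ℝ) 1) ∧
        (∫ x in Set.Ioo (0:ℝ) 1, f x) = ρ ∧ r = rhoOneKZeroL k l f}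
      ((Nat.choose (k + l) k : ℝ) * ρ ^ k * (1 - ρ) ^ l) ∧
    rhoOneKZeroL k l (Set.indicator (Set.Icc 0 ρ) fun _ => (1:ℝ))
      = (Nat.choose (k + l) k : ℝ) * ρ ^ k * (1 - ρ) ^ l := by
  obtain ⟨hρ0, hρ1⟩ := hρ
  have hcomp := rho_indicator_aux k l ρ hρ0 hρ1
  have hIoo₀ : (∫ x in Set.Ioo (0:ℝ) 1, (Set.indicator (Set.Icc 0 ρ) fun _ => (1:ℝ)) x) = ρ := by
    rw [← MeasureTheory.integral_Icc_eq_integral_Ioo]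
    rw [setIntegral_indicator measurableSet_Icc,
      Set.inter_eq_right.mpr (Set.Icc_subset_Icc_right hρ1), setIntegral_const]
    simp [Real.volume_Icc, ENNReal.toReal_ofReal hρ0, hρ0]
  have hm₀ : Measurable (Set.indicator (Set.Icc 0 ρ) fun _ => (1:ℝ)) :=
    measurable_const.indicator measurableSet_Icc
  have h01₀ : ∀ x, (Set.indicator (Set.Icc 0 ρ) fun _ => (1:ℝ)) x ∈ Set.Icc (0:ℝ) 1 := by
    intro x
    by_cases h : x ∈ Set.Icc (0:ℝ) ρ <;>
      simp [Set.indicator_of_mem, Set.indicator_of_notMem, h]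
  refine ⟨⟨⟨_, hm₀, h01₀, hIoo₀, hcomp.symm⟩, ?_⟩, hcomp⟩
  rintro r ⟨f, hfm, hf01, hfint, rfl⟩
  have hIcc : ∫ t in Set.Icc (0:ℝ) 1, f t = ρ := by
    rw [MeasureTheory.integral_Icc_eq_integral_Ioo]
    exact hfint
  have hle := rho_le_aux k l f hfm hf01
  rwa [integral_one_sub_aux f hfm hf01, hIcc] at hle
end

section
/- Define C = 24 · sup over probability measures g on [0,1] of ∫∫_{0<x<y<1} x(y−x) dg(x) dg(y). Then C = 12/e², and the supremum is attained by the measure with density c/x² on [b, 1], an atom of mass b′ at 1, and zero on [0,b), where b = b′ = c = 1/e. -/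
open MeasureTheory

/-- For two independent samples from `μ`, the expectation of `x (y - x)`
where `x` is the smaller and `y` the larger sample: the integral of
`x (y - x)` over ordered pairs `x < y`. -/
noncomputable def orderedPairIntegral (μ : Measure ℝ) : ℝ :=
  ∫ p in {p : ℝ × ℝ | p.1 < p.2}, p.1 * (p.2 - p.1) ∂(μ.prod μ)

/-- The conjecturally optimal measure: density `(1/e)/x²` on `[1/e, 1]`
together with an atom of mass `1/e` at `1`. -/
noncomputable def optMeasure : Measure ℝ :=
  volume.withDensity
      (fun x => ENNReal.ofReal
        (Set.indicator (Set.Icc (Real.exp 1)⁻¹ 1) (fun x => (Real.exp 1)⁻¹ / x ^ 2) x))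
    + (ENNReal.ofReal (Real.exp 1)⁻¹) • Measure.dirac 1

namespace Opt1010

noncomputable def G (μ : Measure ℝ) (t : ℝ) : ENNReal := μ (Set.Ioi t)
noncomputable def g (μ : Measure ℝ) (t : ℝ) : ℝ := (μ (Set.Ioi t)).toReal

lemma G_anti (μ : Measure ℝ) : Antitone (G μ) :=
  fun _ _ hab => measure_mono (Set.Ioi_subset_Ioi hab)

lemma G_meas (μ : Measure ℝ) : Measurable (G μ) := (G_anti μ).measurable

lemma G_ne_top (μ : Measure ℝ) [IsProbabilityMeasure μ] (t : ℝ) : G μ t ≠ ⊤ :=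
  measure_ne_top μ _

lemma G_le_one (μ : Measure ℝ) [IsProbabilityMeasure μ] (t : ℝ) : G μ t ≤ 1 :=
  prob_le_one

lemma G_eq_zero (μ : Measure ℝ) (hs : μ (Set.Icc (0:ℝ) 1)ᶜ = 0) {t : ℝ} (ht : 1 ≤ t) :
    G μ t = 0 := by
  refine measure_mono_null (fun x hx => ?_) hs
  have : t < x := hx
  simp only [Set.mem_compl_iff, Set.mem_Icc, not_and]
  intro _
  linarith

lemma g_nonneg (μ : Measure ℝ) (t : ℝ) : 0 ≤ g μ t := ENNReal.toReal_nonneg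

lemma g_le_one (μ : Measure ℝ) [IsProbabilityMeasure μ] (t : ℝ) : g μ t ≤ 1 := by
  have h := G_le_one μ t
  have := ENNReal.toReal_mono (by simp) h
  exact this

lemma g_meas (μ : Measure ℝ) : Measurable (g μ) := (G_meas μ).ennreal_toReal

lemma G_eq_ofReal_g (μ : Measure ℝ) [IsProbabilityMeasure μ] (t : ℝ) :
    G μ t = ENNReal.ofReal (g μ t) := (ENNReal.ofReal_toReal (G_ne_top μ t)).symm

/-- domain square -/
def sq : Set (ℝ × ℝ) := (Set.Ioo (0:ℝ) 1) ×ˢ (Set.Ioo (0:ℝ) 1)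

def Tset : Set (ℝ × ℝ) := sq ∩ {q : ℝ × ℝ | q.1 < q.2}

def Eset : Set ((ℝ × ℝ) × (ℝ × ℝ)) :=
  {r | 0 < r.2.1 ∧ r.2.1 < r.1.1 ∧ r.1.1 ≤ r.2.2 ∧ r.2.2 < r.1.2}

lemma sq_meas : MeasurableSet sq := measurableSet_Ioo.prod measurableSet_Ioo

lemma Tset_meas : MeasurableSet Tset :=
  sq_meas.inter (measurableSet_lt measurable_fst measurable_snd)

lemma Eset_meas : MeasurableSet Eset := by
  unfold Eset
  simp only [Set.setOf_and]
  exact (measurableSet_lt measurable_const measurable_snd.fst).inter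
    ((measurableSet_lt measurable_snd.fst measurable_fst.fst).inter
      ((measurableSet_le measurable_fst.fst measurable_snd.snd).inter
        (measurableSet_lt measurable_snd.snd measurable_fst.snd)))

lemma mem_Eset {p q : ℝ × ℝ} :
    (p, q) ∈ Eset ↔ 0 < q.1 ∧ q.1 < p.1 ∧ p.1 ≤ q.2 ∧ q.2 < p.2 := Iff.rfl

lemma mem_sq {q : ℝ × ℝ} : q ∈ sq ↔ (0 < q.1 ∧ q.1 < 1) ∧ (0 < q.2 ∧ q.2 < 1) := by
  simp [sq, Set.mem_prod, Set.mem_Ioo]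

lemma mem_Tset {q : ℝ × ℝ} : q ∈ Tset ↔ q ∈ sq ∧ q.1 < q.2 := Iff.rfl

def T'set : Set (ℝ × ℝ) := sq ∩ {q : ℝ × ℝ | q.2 < q.1}

def Dset : Set (ℝ × ℝ) := sq ∩ {q : ℝ × ℝ | q.1 = q.2}

lemma mem_T'set {q : ℝ × ℝ} : q ∈ T'set ↔ q ∈ sq ∧ q.2 < q.1 := Iff.rfl

lemma mem_Dset {q : ℝ × ℝ} : q ∈ Dset ↔ q ∈ sq ∧ q.1 = q.2 := Iff.rfl

lemma T'set_meas : MeasurableSet T'set :=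
  sq_meas.inter (measurableSet_lt measurable_snd measurable_fst)

lemma Dset_meas : MeasurableSet Dset :=
  sq_meas.inter (measurableSet_eq_fun measurable_fst measurable_snd)

theorem repr (μ : Measure ℝ) [IsProbabilityMeasure μ] (hs : μ (Set.Icc (0:ℝ) 1)ᶜ = 0) :
    orderedPairIntegral μ
      = (∫ t in Set.Ioo (0:ℝ) 1, g μ t) ^ 2 / 2 - ∫ t in Set.Ioo (0:ℝ) 1, t * g μ t ^ 2 := by
  classical
  have hS : MeasurableSet {p : ℝ × ℝ | p.1 < p.2} :=
    measurableSet_lt measurable_fst measurable_snd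
  set m : ℝ := ∫ t in Set.Ioo (0:ℝ) 1, g μ t with hm_def
  set w : ℝ := ∫ t in Set.Ioo (0:ℝ) 1, t * g μ t ^ 2 with hw_def
  set M : ENNReal := ∫⁻ t in Set.Ioo (0:ℝ) 1, G μ t ∂volume with hM_def
  set X : ENNReal := ∫⁻ q in Tset, G μ q.1 * G μ q.2 ∂(volume.prod volume) with hX_def
  set W : ENNReal := ∫⁻ q in Tset, G μ q.2 * G μ q.2 ∂(volume.prod volume) with hW_def
  -- a.e. the first coordinate is nonnegative
  have hae : ∀ᵐ p ∂(μ.prod μ), (0:ℝ) ≤ p.1 := by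
    rw [MeasureTheory.ae_iff]
    refine measure_mono_null (t := (Set.Icc (0:ℝ) 1)ᶜ ×ˢ (Set.univ : Set ℝ))
      (fun p hp => ?_) ?_
    · have hp' : p.1 < 0 := not_le.mp hp
      exact Set.mem_prod.mpr ⟨fun hmem => absurd hmem.1 (by linarith), Set.mem_univ _⟩
    · rw [Measure.prod_prod, hs, zero_mul]
  -- Step 1 : pass to lintegral
  have step1 : orderedPairIntegral μ
      = (∫⁻ p in {p : ℝ × ℝ | p.1 < p.2}, ENNReal.ofReal (p.1 * (p.2 - p.1)) ∂(μ.prod μ)).toReal := by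
    rw [show orderedPairIntegral μ
        = ∫ p in {p : ℝ × ℝ | p.1 < p.2}, p.1 * (p.2 - p.1) ∂(μ.prod μ) from rfl]
    rw [integral_eq_lintegral_of_nonneg_ae]
    · have h1 : ∀ᵐ p ∂((μ.prod μ).restrict {p : ℝ × ℝ | p.1 < p.2}), (0:ℝ) ≤ p.1 :=
        ae_restrict_of_ae hae
      have h2 := ae_restrict_mem (μ := μ.prod μ) hS
      filter_upwards [h1, h2] with p hp1 hp2
      have : p.1 < p.2 := hp2
      exact mul_nonneg hp1 (by linarith)
    · exact ((measurable_fst.mul (measurable_snd.sub measurable_fst)).aestronglyMeasurable)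
  -- Step 2 : integrand as Lebesgue measure of a rectangle
  have key2 : ∀ p : ℝ × ℝ, {p : ℝ × ℝ | p.1 < p.2}.indicator
        (fun p : ℝ × ℝ => ENNReal.ofReal (p.1 * (p.2 - p.1))) p
      = (volume.prod volume) ((Set.Ioo (0:ℝ) p.1) ×ˢ (Set.Ico p.1 p.2)) := by
    intro p
    rw [Measure.prod_prod, Real.volume_Ioo, Real.volume_Ico, sub_zero]
    by_cases hp : p.1 < p.2
    · rw [Set.indicator_of_mem (show p ∈ {p : ℝ × ℝ | p.1 < p.2} from hp)]
      by_cases h0 : 0 ≤ p.1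
      · exact ENNReal.ofReal_mul h0
      · have hneg : p.1 * (p.2 - p.1) ≤ 0 :=
          mul_nonpos_of_nonpos_of_nonneg (le_of_not_ge h0) (by linarith)
        rw [ENNReal.ofReal_of_nonpos (le_of_not_ge h0), zero_mul,
          ENNReal.ofReal_of_nonpos hneg]
    · rw [Set.indicator_of_notMem (show p ∉ {p : ℝ × ℝ | p.1 < p.2} from hp)]
      rw [ENNReal.ofReal_of_nonpos (by linarith [le_of_not_gt hp] : p.2 - p.1 ≤ 0), mul_zero]
  have step2 : (∫⁻ p in {p : ℝ × ℝ | p.1 < p.2}, ENNReal.ofReal (p.1 * (p.2 - p.1)) ∂(μ.prod μ))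
      = ∫⁻ p, (volume.prod volume) ((Set.Ioo (0:ℝ) p.1) ×ˢ (Set.Ico p.1 p.2)) ∂(μ.prod μ) := by
    rw [← lintegral_indicator hS]
    exact lintegral_congr key2
  -- Step 3 : swap the two double integrals
  set f : (ℝ × ℝ) → (ℝ × ℝ) → ENNReal := fun p q => Eset.indicator 1 (p, q) with hf_def
  have hf_meas : Measurable (Function.uncurry f) := by
    have : Function.uncurry f = Eset.indicator 1 := rfl
    rw [this]
    exact measurable_one.indicator Eset_meas
  have step3a : ∀ p : ℝ × ℝ, (volume.prod volume) ((Set.Ioo (0:ℝ) p.1) ×ˢ (Set.Ico p.1 p.2))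
      = ∫⁻ q, f p q ∂(volume.prod volume) := by
    intro p
    have hpt : ∀ q : ℝ × ℝ, f p q = ((Set.Ioo (0:ℝ) p.1) ×ˢ (Set.Ico p.1 p.2)).indicator 1 q := by
      intro q
      by_cases hq : q ∈ (Set.Ioo (0:ℝ) p.1) ×ˢ (Set.Ico p.1 p.2)
      · rw [Set.indicator_of_mem hq]
        have hq' : (p, q) ∈ Eset := mem_Eset.mpr ⟨hq.1.1, hq.1.2, hq.2.1, hq.2.2⟩
        rw [hf_def]
        exact Set.indicator_of_mem hq' 1
      · have hq' : (p, q) ∉ Eset := fun he => by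
          obtain ⟨h1, h2, h3, h4⟩ := mem_Eset.mp he
          exact hq ⟨⟨h1, h2⟩, ⟨h3, h4⟩⟩
        rw [Set.indicator_of_notMem hq, hf_def]
        exact Set.indicator_of_notMem hq' 1
    rw [lintegral_congr hpt, lintegral_indicator_one (measurableSet_Ioo.prod measurableSet_Ico)]
  have step3 : (∫⁻ p, (volume.prod volume) ((Set.Ioo (0:ℝ) p.1) ×ˢ (Set.Ico p.1 p.2)) ∂(μ.prod μ))
      = ∫⁻ q, ∫⁻ p, f p q ∂(μ.prod μ) ∂(volume.prod volume) := by
    calc ∫⁻ p, (volume.prod volume) ((Set.Ioo (0:ℝ) p.1) ×ˢ (Set.Ico p.1 p.2)) ∂(μ.prod μ)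
        = ∫⁻ p, ∫⁻ q, f p q ∂(volume.prod volume) ∂(μ.prod μ) := lintegral_congr step3a
      _ = ∫⁻ q, ∫⁻ p, f p q ∂(μ.prod μ) ∂(volume.prod volume) :=
          lintegral_lintegral_swap hf_meas.aemeasurable
  -- Step 4 : inner integral
  have step4 : ∀ q : ℝ × ℝ, (∫⁻ p, f p q ∂(μ.prod μ))
      = if 0 < q.1 then μ (Set.Ioc q.1 q.2) * μ (Set.Ioi q.2) else 0 := by
    intro q
    by_cases h0 : 0 < q.1
    · rw [if_pos h0]
      have hpt : ∀ p : ℝ × ℝ, f p q = ((Set.Ioc q.1 q.2) ×ˢ (Set.Ioi q.2)).indicator 1 p := by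
        intro p
        by_cases hp : p ∈ (Set.Ioc q.1 q.2) ×ˢ (Set.Ioi q.2)
        · rw [Set.indicator_of_mem hp, hf_def]
          exact Set.indicator_of_mem (mem_Eset.mpr ⟨h0, hp.1.1, hp.1.2, hp.2⟩) 1
        · rw [Set.indicator_of_notMem hp, hf_def]
          refine Set.indicator_of_notMem (fun he => ?_) 1
          obtain ⟨h1, h2, h3, h4⟩ := mem_Eset.mp he
          exact hp ⟨⟨h2, h3⟩, h4⟩
      rw [lintegral_congr hpt, lintegral_indicator_one (measurableSet_Ioc.prod measurableSet_Ioi),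
        Measure.prod_prod]
    · rw [if_neg h0]
      have hpt : ∀ p : ℝ × ℝ, f p q = 0 := by
        intro p
        rw [hf_def]
        exact Set.indicator_of_notMem (fun he => h0 (mem_Eset.mp he).1) 1
      rw [lintegral_congr hpt, lintegral_zero]
  -- Step 5 : rewrite via tails, restrict to the square
  have step5 : ∀ q : ℝ × ℝ, (if 0 < q.1 then μ (Set.Ioc q.1 q.2) * μ (Set.Ioi q.2) else 0)
      = Tset.indicator (fun q => (G μ q.1 - G μ q.2) * G μ q.2) q := by
    intro q
    by_cases hq : q ∈ Tset
    · obtain ⟨hsq', hlt'⟩ := mem_Tset.mp hq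
      obtain ⟨hq1, hq2⟩ := mem_sq.mp hsq'
      rw [Set.indicator_of_mem hq, if_pos hq1.1]
      congr 1
      have hIoc : Set.Ioc q.1 q.2 = Set.Ioi q.1 \ Set.Ioi q.2 := (Set.Ioi_diff_Ioi).symm
      rw [hIoc, measure_diff (Set.Ioi_subset_Ioi hlt'.le)
        measurableSet_Ioi.nullMeasurableSet (measure_ne_top μ _)]
      rfl
    · rw [Set.indicator_of_notMem hq]
      by_cases h0 : 0 < q.1
      · rw [if_pos h0]
        by_cases hlt : q.1 < q.2
        · -- q ∉ sq then
          by_cases h1 : q.1 < 1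
          · -- q.2 ∉ Ioo 0 1, but q.2 > q.1 > 0 so q.2 ≥ 1
            have h2 : (1:ℝ) ≤ q.2 := by
              by_contra hc
              push_neg at hc
              exact hq (mem_Tset.mpr ⟨mem_sq.mpr ⟨⟨h0, h1⟩, ⟨lt_trans h0 hlt, hc⟩⟩, hlt⟩)
            have : μ (Set.Ioi q.2) = 0 := G_eq_zero μ hs h2
            rw [this, mul_zero]
          · push_neg at h1
            have : μ (Set.Ioc q.1 q.2) = 0 :=
              measure_mono_null Set.Ioc_subset_Ioi_self (G_eq_zero μ hs h1)
            rw [this, zero_mul]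
        · have : Set.Ioc q.1 q.2 = ∅ := Set.Ioc_eq_empty hlt
          rw [this, measure_empty, zero_mul]
      · rw [if_neg h0]
  -- Put together : lintegral over Tset
  have hL : (∫⁻ p in {p : ℝ × ℝ | p.1 < p.2}, ENNReal.ofReal (p.1 * (p.2 - p.1)) ∂(μ.prod μ))
      = ∫⁻ q in Tset, (G μ q.1 - G μ q.2) * G μ q.2 ∂(volume.prod volume) := by
    rw [step2, step3]
    calc ∫⁻ q, ∫⁻ p, f p q ∂(μ.prod μ) ∂(volume.prod volume)
        = ∫⁻ q, Tset.indicator (fun q => (G μ q.1 - G μ q.2) * G μ q.2) q ∂(volume.prod volume) :=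
          lintegral_congr (fun q => (step4 q).trans (step5 q))
      _ = ∫⁻ q in Tset, (G μ q.1 - G μ q.2) * G μ q.2 ∂(volume.prod volume) :=
          lintegral_indicator Tset_meas _
  -- finiteness facts
  have hM_le_one : M ≤ 1 := by
    rw [hM_def]
    calc ∫⁻ t in Set.Ioo (0:ℝ) 1, G μ t ∂volume
        ≤ ∫⁻ _ in Set.Ioo (0:ℝ) 1, 1 ∂volume := lintegral_mono (fun t => G_le_one μ t)
      _ = volume (Set.Ioo (0:ℝ) 1) := setLIntegral_one _
      _ = 1 := by rw [Real.volume_Ioo]; norm_num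
  have hM_fin : M ≠ ⊤ := ne_top_of_le_ne_top (by simp) hM_le_one
  -- X + X = M * M
  have hP : (∫⁻ q in sq, G μ q.1 * G μ q.2 ∂(volume.prod volume)) = M * M := by
    rw [show sq = (Set.Ioo (0:ℝ) 1) ×ˢ (Set.Ioo (0:ℝ) 1) from rfl, ← Measure.prod_restrict]
    exact lintegral_prod_mul (G_meas μ).aemeasurable (G_meas μ).aemeasurable
  have hsplit : sq = Tset ∪ (T'set ∪ Dset) := by
    ext q
    rw [Set.mem_union, Set.mem_union, mem_Tset, mem_T'set, mem_Dset]
    constructor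
    · intro h
      rcases lt_trichotomy q.1 q.2 with h' | h' | h'
      · exact Or.inl ⟨h, h'⟩
      · exact Or.inr (Or.inr ⟨h, h'⟩)
      · exact Or.inr (Or.inl ⟨h, h'⟩)
    · rintro (⟨h, _⟩ | ⟨h, _⟩ | ⟨h, _⟩) <;> exact h
  have hdisj1 : Disjoint Tset (T'set ∪ Dset) := by
    rw [Set.disjoint_left]
    rintro q hq (hq' | hq')
    · exact absurd (lt_trans (mem_Tset.mp hq).2 (mem_T'set.mp hq').2) (lt_irrefl _)
    · exact absurd (mem_Dset.mp hq').2 (ne_of_lt (mem_Tset.mp hq).2)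
  have hdisj2 : Disjoint T'set Dset := by
    rw [Set.disjoint_left]
    rintro q hq hq'
    exact absurd (mem_Dset.mp hq').2 (ne_of_gt (mem_T'set.mp hq).2)
  have hdiag : (volume.prod volume) {q : ℝ × ℝ | q.1 = q.2} = 0 := by
    rw [Measure.prod_apply (measurableSet_eq_fun measurable_fst measurable_snd)]
    have hpre : ∀ x : ℝ, (Prod.mk x ⁻¹' {q : ℝ × ℝ | q.1 = q.2}) = {x} := by
      intro x; ext y
      simp [eq_comm]
    simp [hpre]
  have hD0 : (volume.prod volume) Dset = 0 :=
    measure_mono_null Set.inter_subset_right hdiag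
  have hswapT : (∫⁻ q in T'set, G μ q.1 * G μ q.2 ∂(volume.prod volume))
      = ∫⁻ q in Tset, G μ q.1 * G μ q.2 ∂(volume.prod volume) := by
    have hmp : MeasurePreserving (Prod.swap : ℝ × ℝ → ℝ × ℝ)
        (volume.prod volume) (volume.prod volume) := Measure.measurePreserving_swap
    have hemb : MeasurableEmbedding (Prod.swap : ℝ × ℝ → ℝ × ℝ) :=
      MeasurableEquiv.prodComm.measurableEmbedding
    have himg : (Prod.swap '' T'set) = Tset := by
      rw [Set.image_swap_eq_preimage_swap]
      ext q
      constructor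
      · intro h
        have h1 := (mem_T'set.mp h).1
        have h2 : q.1 < q.2 := (mem_T'set.mp h).2
        have h3 := mem_sq.mp h1
        exact mem_Tset.mpr ⟨mem_sq.mpr ⟨h3.2, h3.1⟩, h2⟩
      · intro h
        obtain ⟨hsq', hlt⟩ := mem_Tset.mp h
        have h3 := mem_sq.mp hsq'
        exact mem_T'set.mpr ⟨mem_sq.mpr ⟨h3.2, h3.1⟩, hlt⟩
    calc ∫⁻ q in T'set, G μ q.1 * G μ q.2 ∂(volume.prod volume)
        = ∫⁻ q in T'set, G μ (Prod.swap q).1 * G μ (Prod.swap q).2 ∂(volume.prod volume) := by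
          refine lintegral_congr (fun q => ?_)
          rw [Prod.fst_swap, Prod.snd_swap, mul_comm]
      _ = ∫⁻ q in Prod.swap '' T'set, G μ q.1 * G μ q.2 ∂(volume.prod volume) :=
          hmp.setLIntegral_comp_emb hemb (fun q => G μ q.1 * G μ q.2) T'set
      _ = ∫⁻ q in Tset, G μ q.1 * G μ q.2 ∂(volume.prod volume) := by rw [himg]
  have hXX : X + X = M * M := by
    have h := hP
    rw [hsplit, lintegral_union (T'set_meas.union Dset_meas) hdisj1,
      lintegral_union Dset_meas hdisj2, setLIntegral_measure_zero _ _ hD0, add_zero,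
      hswapT] at h
    exact h
  have hX_fin : X ≠ ⊤ := by
    have hXle : X ≤ M * M := hXX ▸ le_self_add
    exact ne_top_of_le_ne_top (ENNReal.mul_ne_top hM_fin hM_fin) hXle
  have hW_fin : W ≠ ⊤ := by
    have hle : W ≤ (volume.prod volume) Tset := by
      rw [hW_def, ← setLIntegral_one]
      exact lintegral_mono (fun q => mul_le_one' (G_le_one μ _) (G_le_one μ _))
    have hle2 : (volume.prod volume) Tset ≤ 1 := by
      calc (volume.prod volume) Tset ≤ (volume.prod volume) sq :=
            measure_mono Set.inter_subset_left
        _ = 1 := by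
            rw [show sq = (Set.Ioo (0:ℝ) 1) ×ˢ (Set.Ioo (0:ℝ) 1) from rfl, Measure.prod_prod,
              Real.volume_Ioo]
            norm_num
    exact ne_top_of_le_ne_top (by simp) (hle.trans hle2)
  have hWX : W ≤ X := by
    rw [hW_def, hX_def]
    refine lintegral_mono_ae ?_
    filter_upwards [ae_restrict_mem Tset_meas] with q hq
    exact mul_le_mul_left (G_anti μ (le_of_lt (mem_Tset.mp hq).2)) _
  have hLXW : (∫⁻ q in Tset, (G μ q.1 - G μ q.2) * G μ q.2 ∂(volume.prod volume)) = X - W := by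
    have h1 : ∀ q : ℝ × ℝ, (G μ q.1 - G μ q.2) * G μ q.2
        = G μ q.1 * G μ q.2 - G μ q.2 * G μ q.2 :=
      fun q => ENNReal.sub_mul (fun _ _ => G_ne_top μ _)
    rw [lintegral_congr h1]
    exact lintegral_sub (((G_meas μ).comp measurable_snd).mul ((G_meas μ).comp measurable_snd))
      hW_fin (by
        filter_upwards [ae_restrict_mem Tset_meas] with q hq
        exact mul_le_mul_left (G_anti μ (le_of_lt (mem_Tset.mp hq).2)) _)
  -- W as a one-dimensional integral
  have hW1 : W = ∫⁻ t in Set.Ioo (0:ℝ) 1, G μ t * G μ t * ENNReal.ofReal t ∂volume := by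
    rw [hW_def, ← lintegral_indicator Tset_meas]
    have hmeasW : Measurable (Tset.indicator (fun q : ℝ × ℝ => G μ q.2 * G μ q.2)) :=
      Measurable.indicator
        (((G_meas μ).comp measurable_snd).mul ((G_meas μ).comp measurable_snd)) Tset_meas
    rw [lintegral_prod_symm (Tset.indicator (fun q : ℝ × ℝ => G μ q.2 * G μ q.2))
      hmeasW.aemeasurable]
    rw [← lintegral_indicator measurableSet_Ioo]
    refine lintegral_congr (fun t => ?_)
    by_cases ht : t ∈ Set.Ioo (0:ℝ) 1
    · have hpt : ∀ s : ℝ, Tset.indicator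
          (fun q : ℝ × ℝ => G μ q.2 * G μ q.2) (s, t)
          = (Set.Ioo (0:ℝ) t).indicator (fun _ => G μ t * G μ t) s := by
        intro s
        by_cases hst : s ∈ Set.Ioo (0:ℝ) t
        · have hmem : ((s, t) : ℝ × ℝ) ∈ Tset :=
            mem_Tset.mpr ⟨mem_sq.mpr ⟨⟨hst.1, lt_trans hst.2 ht.2⟩, ⟨ht.1, ht.2⟩⟩, hst.2⟩
          rw [Set.indicator_of_mem hmem, Set.indicator_of_mem hst]
        · have hmem : ((s, t) : ℝ × ℝ) ∉ Tset := by
            intro hmem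
            obtain ⟨hsq', hlt⟩ := mem_Tset.mp hmem
            exact hst ⟨(mem_sq.mp hsq').1.1, hlt⟩
          rw [Set.indicator_of_notMem hmem, Set.indicator_of_notMem hst]
      rw [lintegral_congr hpt, lintegral_indicator measurableSet_Ioo, setLIntegral_const,
        Real.volume_Ioo, sub_zero, Set.indicator_of_mem ht]
    · have hpt : ∀ s : ℝ, Tset.indicator
          (fun q : ℝ × ℝ => G μ q.2 * G μ q.2) (s, t) = 0 := by
        intro s
        refine Set.indicator_of_notMem (fun hmem => ?_) _
        exact ht ((mem_sq.mp (mem_Tset.mp hmem).1).2)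
      rw [lintegral_congr hpt, lintegral_zero, Set.indicator_of_notMem ht]
  -- toReal versions
  have hm_eq : M.toReal = m := by
    rw [hM_def, hm_def,
      ← integral_toReal ((G_meas μ).aemeasurable.restrict)
        (Filter.Eventually.of_forall (fun t => measure_lt_top μ _))]
    rfl
  have hx_eq : X.toReal = m ^ 2 / 2 := by
    have h := congrArg ENNReal.toReal hXX
    rw [ENNReal.toReal_add hX_fin hX_fin, ENNReal.toReal_mul, hm_eq] at h
    nlinarith [h]
  have hw_eq : W.toReal = w := by
    have hgoal : (∫ t in Set.Ioo (0:ℝ) 1, t * g μ t ^ 2)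
        = (∫⁻ t in Set.Ioo (0:ℝ) 1, ENNReal.ofReal (t * g μ t ^ 2) ∂volume).toReal := by
      refine integral_eq_lintegral_of_nonneg_ae ?_ ?_
      · filter_upwards [ae_restrict_mem measurableSet_Ioo] with t ht
        exact mul_nonneg (le_of_lt ht.1) (sq_nonneg _)
      · exact (measurable_id.mul ((g_meas μ).pow_const 2)).aestronglyMeasurable
    rw [hw_def, hgoal, hW1]
    congr 1
    refine setLIntegral_congr_fun measurableSet_Ioo
      (fun t ht => ?_)
    have hG : G μ t = ENNReal.ofReal (g μ t) := G_eq_ofReal_g μ t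
    rw [hG, show t * g μ t ^ 2 = g μ t * (g μ t * t) from by ring,
      ENNReal.ofReal_mul (g_nonneg μ t), ENNReal.ofReal_mul (g_nonneg μ t), mul_assoc]
  rw [step1, hL, hLXW, ENNReal.toReal_sub_of_le hWX hX_fin, hx_eq, hw_eq]

/-! ### Helper lemmas for one-dimensional integrals -/

lemma Ioo_split (a : ℝ) (h0 : 0 < a) (h1 : a ≤ 1) :
    Set.Ioo (0:ℝ) 1 = Set.Ioo 0 a ∪ Set.Ico a 1 := by
  ext x
  simp only [Set.mem_Ioo, Set.mem_union, Set.mem_Ico]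
  constructor
  · rintro ⟨hx0, hx1⟩
    rcases lt_or_ge x a with h | h
    · exact Or.inl ⟨hx0, h⟩
    · exact Or.inr ⟨h, hx1⟩
  · rintro (⟨hx0, hxa⟩ | ⟨hax, hx1⟩)
    · exact ⟨hx0, lt_of_lt_of_le hxa h1⟩
    · exact ⟨lt_of_lt_of_le h0 hax, hx1⟩

lemma disj_split (a : ℝ) : Disjoint (Set.Ioo (0:ℝ) a) (Set.Ico a 1) := by
  rw [Set.disjoint_left]
  rintro x ⟨_, hxa⟩ ⟨hax, _⟩
  exact absurd hxa (not_lt.mpr hax)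

lemma integral_Ioo (p q : ℝ) (h : p ≤ q) (f : ℝ → ℝ) :
    ∫ t in Set.Ioo p q, f t = ∫ t in p..q, f t := by
  rw [intervalIntegral.integral_of_le h, integral_Ioc_eq_integral_Ioo]

lemma integral_Ico (p q : ℝ) (h : p ≤ q) (f : ℝ → ℝ) :
    ∫ t in Set.Ico p q, f t = ∫ t in p..q, f t := by
  rw [intervalIntegral.integral_of_le h, integral_Ioc_eq_integral_Ioo,
    integral_Ico_eq_integral_Ioo]

lemma integrableOn_of_bounded_meas {f : ℝ → ℝ} {s : Set ℝ} (hs : MeasurableSet s)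
    (hvol : volume s ≠ ⊤) (hf : Measurable f) {C : ℝ}
    (hC : ∀ x ∈ s, |f x| ≤ C) : IntegrableOn f s volume := by
  haveI : IsFiniteMeasure (volume.restrict s) :=
    ⟨by rw [Measure.restrict_apply_univ]; exact lt_top_iff_ne_top.mpr hvol⟩
  refine ⟨hf.aestronglyMeasurable, HasFiniteIntegral.of_bounded (C := C) ?_⟩
  filter_upwards [ae_restrict_mem hs] with x hx
  simpa [Real.norm_eq_abs] using hC x hx

lemma neg_log_le (a : ℝ) (h0 : 0 < a) (h1 : a ≤ 1) :
    a * (-Real.log a) ≤ (Real.exp 1)⁻¹ := by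
  set c : ℝ := -Real.log a with hc_def
  have ha : a = Real.exp (-c) := by
    rw [hc_def, neg_neg, Real.exp_log h0]
  have h1' : c ≤ Real.exp (c - 1) := by
    have := Real.add_one_le_exp (c - 1)
    linarith
  calc a * c = Real.exp (-c) * c := by rw [← ha]
    _ ≤ Real.exp (-c) * Real.exp (c - 1) :=
        mul_le_mul_of_nonneg_left h1' (Real.exp_pos _).le
    _ = Real.exp (-1) := by
        rw [← Real.exp_add]
        congr 1
        ring
    _ = (Real.exp 1)⁻¹ := Real.exp_neg 1

/-! ### Upper bound -/

theorem upper_bound (μ : Measure ℝ) [IsProbabilityMeasure μ]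
    (hs : μ (Set.Icc (0:ℝ) 1)ᶜ = 0) :
    orderedPairIntegral μ ≤ 1 / (2 * Real.exp 1 ^ 2) := by
  rw [repr μ hs]
  set m : ℝ := ∫ t in Set.Ioo (0:ℝ) 1, g μ t with hm_def
  set w : ℝ := ∫ t in Set.Ioo (0:ℝ) 1, t * g μ t ^ 2 with hw_def
  have hIoo_vol : volume (Set.Ioo (0:ℝ) 1) ≠ ⊤ := by
    rw [Real.volume_Ioo]; exact ENNReal.ofReal_ne_top
  have hg_int : IntegrableOn (g μ) (Set.Ioo (0:ℝ) 1) volume :=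
    integrableOn_of_bounded_meas measurableSet_Ioo hIoo_vol (g_meas μ)
      (C := 1) (fun x _ => by rw [abs_of_nonneg (g_nonneg μ x)]; exact g_le_one μ x)
  have htg_int : IntegrableOn (fun t => t * g μ t ^ 2) (Set.Ioo (0:ℝ) 1) volume :=
    integrableOn_of_bounded_meas measurableSet_Ioo hIoo_vol
      (measurable_id.mul ((g_meas μ).pow_const 2)) (C := 1)
      (fun x hx => by
        rw [abs_of_nonneg (mul_nonneg hx.1.le (sq_nonneg _))]
        nlinarith [g_nonneg μ x, g_le_one μ x, hx.1, hx.2])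
  have hw0 : 0 ≤ w := setIntegral_nonneg measurableSet_Ioo
      (fun t ht => mul_nonneg ht.1.le (sq_nonneg _))
  have hm0 : 0 ≤ m := setIntegral_nonneg measurableSet_Ioo (fun t _ => g_nonneg μ t)
  have hm1 : m ≤ 1 := by
    have h := setIntegral_mono_on hg_int
      (integrableOn_of_bounded_meas measurableSet_Ioo hIoo_vol measurable_const (C := 1)
        (fun x _ => by norm_num))
      measurableSet_Ioo (fun t _ => g_le_one μ t)
    rw [setIntegral_const, measureReal_def, Real.volume_Ioo] at h
    simpa using h
  have hrpos : (0:ℝ) < 1 / (2 * Real.exp 1 ^ 2) := by positivity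
  rcases eq_or_lt_of_le hm0 with hm | hm
  · rw [← hm]
    nlinarith [hw0, hrpos]
  -- key inequality for every `a`
  have key : ∀ a : ℝ, 0 < a → a ≤ 1 →
      2 * a * m - w ≤ 3 / 2 * a ^ 2 - a ^ 2 * Real.log a := by
    intro a ha0 ha1
    have h0uIcc : (0:ℝ) ∉ Set.uIcc a 1 := by
      rw [Set.uIcc_of_le ha1]
      rintro ⟨h, _⟩
      exact absurd h (not_le.mpr ha0)
    set Φ : ℝ → ℝ := fun t => if t < a then 2 * a - t else a ^ 2 / t with hΦ_def
    have hΦ_meas : Measurable Φ := by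
      refine Measurable.ite (measurableSet_lt measurable_id measurable_const) ?_ ?_
      · exact measurable_const.sub measurable_id
      · exact measurable_const.div measurable_id
    have hΦ_int : IntegrableOn Φ (Set.Ioo (0:ℝ) 1) volume := by
      refine integrableOn_of_bounded_meas measurableSet_Ioo hIoo_vol hΦ_meas (C := 2 * a) ?_
      intro x hx
      simp only [hΦ_def]
      by_cases h : x < a
      · rw [if_pos h, abs_of_nonneg (by linarith [hx.1])]
        linarith [hx.1]
      · push_neg at h
        have hx0 : 0 < x := lt_of_lt_of_le ha0 h
        rw [if_neg (not_lt.mpr h), abs_of_nonneg (div_nonneg (sq_nonneg a) hx0.le),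
          div_le_iff₀ hx0]
        nlinarith
    have hlhs_int : IntegrableOn (fun t => 2 * a * g μ t - t * g μ t ^ 2)
        (Set.Ioo (0:ℝ) 1) volume := (hg_int.const_mul (2 * a)).sub htg_int
    have hpt : ∀ t ∈ Set.Ioo (0:ℝ) 1, 2 * a * g μ t - t * g μ t ^ 2 ≤ Φ t := by
      intro t ht
      have hu0 : 0 ≤ g μ t := g_nonneg μ t
      have hu1 : g μ t ≤ 1 := g_le_one μ t
      simp only [hΦ_def]
      by_cases h : t < a
      · rw [if_pos h]
        nlinarith [mul_nonneg (sub_nonneg.mpr hu1)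
          (sub_nonneg.mpr (show t * (1 + g μ t) ≤ 2 * a by nlinarith [ht.1]))]
      · push_neg at h
        rw [if_neg (not_lt.mpr h), le_div_iff₀ ht.1]
        nlinarith [sq_nonneg (t * g μ t - a)]
    have hmono := setIntegral_mono_on hlhs_int hΦ_int measurableSet_Ioo hpt
    have hlhs_eq : (∫ t in Set.Ioo (0:ℝ) 1, (2 * a * g μ t - t * g μ t ^ 2))
        = 2 * a * m - w := by
      rw [integral_sub (hg_int.const_mul (2 * a)) htg_int, integral_const_mul]
    have hΦ_eq : (∫ t in Set.Ioo (0:ℝ) 1, Φ t) = 3 / 2 * a ^ 2 - a ^ 2 * Real.log a := by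
      rw [Ioo_split a ha0 ha1, setIntegral_union (disj_split a) measurableSet_Ico
        (hΦ_int.mono_set (by rw [Ioo_split a ha0 ha1]; exact Set.subset_union_left))
        (hΦ_int.mono_set (by rw [Ioo_split a ha0 ha1]; exact Set.subset_union_right))]
      have h1 : (∫ t in Set.Ioo (0:ℝ) a, Φ t) = ∫ t in Set.Ioo (0:ℝ) a, (2 * a - t) :=
        setIntegral_congr_fun measurableSet_Ioo
          (fun t ht => by simp only [hΦ_def]; exact if_pos ht.2)
      have h2 : (∫ t in Set.Ico a 1, Φ t) = ∫ t in Set.Ico a 1, a ^ 2 * t⁻¹ := by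
        refine setIntegral_congr_fun measurableSet_Ico (fun t ht => ?_)
        simp only [hΦ_def]
        have : ¬ t < a := not_lt.mpr ht.1
        rw [if_neg this, div_eq_mul_inv]
      rw [h1, h2, integral_Ioo 0 a ha0.le, integral_Ico a 1 ha1]
      rw [intervalIntegral.integral_sub (intervalIntegrable_const (c := 2 * a))
        intervalIntegral.intervalIntegrable_id,
        intervalIntegral.integral_const, integral_id,
        intervalIntegral.integral_const_mul, integral_inv h0uIcc]
      rw [one_div, Real.log_inv]
      rw [smul_eq_mul]
      ring
    rw [hlhs_eq, hΦ_eq] at hmono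
    exact hmono
  -- choose `a` with `a (1 - log a) = m`
  obtain ⟨a, ha_mem, ha⟩ : ∃ a ∈ Set.Icc ((m/3)^2) 1, a * (1 - Real.log a) = m := by
    have hlo_pos : (0:ℝ) < (m/3)^2 := by positivity
    have hlo_le : ((m/3):ℝ)^2 ≤ 1 := by nlinarith
    have hcont : ContinuousOn (fun a : ℝ => a * (1 - Real.log a)) (Set.Icc ((m/3)^2) 1) := by
      refine ContinuousOn.mul continuousOn_id (ContinuousOn.sub continuousOn_const ?_)
      refine Real.continuousOn_log.mono ?_
      intro x hx
      simp only [Set.mem_compl_iff, Set.mem_singleton_iff]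
      exact ne_of_gt (lt_of_lt_of_le hlo_pos hx.1)
    have hlo_val : ((m/3):ℝ)^2 * (1 - Real.log ((m/3)^2)) ≤ m := by
      set b : ℝ := m / 3 with hb_def
      have hb0 : 0 < b := by positivity
      have hlog2 : Real.log (b ^ 2) = 2 * Real.log b := by
        rw [Real.log_pow]; push_cast; ring
      have hinv : Real.log b⁻¹ ≤ b⁻¹ - 1 := Real.log_le_sub_one_of_pos (by positivity)
      rw [Real.log_inv] at hinv
      have hbinv : b * b⁻¹ = 1 := mul_inv_cancel₀ (ne_of_gt hb0)
      have hm3 : m = 3 * b := by rw [hb_def]; ring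
      rw [hlog2, hm3]
      nlinarith [mul_le_mul_of_nonneg_left hinv (by positivity : (0:ℝ) ≤ 2 * b^2), hbinv, hb0]
    have hhi_val : m ≤ 1 * (1 - Real.log 1) := by
      rw [Real.log_one]; linarith
    obtain ⟨a, ha_mem, ha_val⟩ := intermediate_value_Icc hlo_le hcont ⟨hlo_val, hhi_val⟩
    exact ⟨a, ha_mem, ha_val⟩
  have ha0 : 0 < a := lt_of_lt_of_le (by positivity) ha_mem.1
  have ha1 : a ≤ 1 := ha_mem.2
  have hkey := key a ha0 ha1
  have hsub : m ^ 2 / 2 - (2*a*m - (3/2*a^2 - a^2*Real.log a)) = (a * Real.log a)^2 / 2 := by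
    rw [← ha]; ring
  have hbound : (a * Real.log a) ^ 2 / 2 ≤ 1 / (2 * Real.exp 1 ^ 2) := by
    have h := neg_log_le a ha0 ha1
    have h0 : 0 ≤ a * -Real.log a :=
      mul_nonneg ha0.le (by linarith [Real.log_nonpos ha0.le ha1])
    have h2 : (a * -Real.log a) ^ 2 ≤ ((Real.exp 1)⁻¹) ^ 2 := by nlinarith
    have h3 : (a * Real.log a) ^ 2 = (a * -Real.log a) ^ 2 := by ring
    have h4 : (1:ℝ) / (2 * Real.exp 1 ^ 2) = ((Real.exp 1)⁻¹)^2 / 2 := by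
      rw [inv_pow]
      field_simp
    rw [h3, h4]
    linarith
  linarith [hkey, hsub, hbound]

/-! ### The optimal measure -/

lemma l_pos : 0 < (Real.exp 1)⁻¹ := by positivity

lemma exp_one_gt_one : (1:ℝ) < Real.exp 1 := by
  linarith [Real.add_one_le_exp 1]

lemma l_lt_one : (Real.exp 1)⁻¹ < 1 := by
  rw [inv_lt_one_iff₀]
  right
  exact exp_one_gt_one

lemma dens_eq : (fun x => ENNReal.ofReal
      (Set.indicator (Set.Icc (Real.exp 1)⁻¹ 1) (fun x => (Real.exp 1)⁻¹ / x ^ 2) x))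
    = Set.indicator (Set.Icc (Real.exp 1)⁻¹ 1)
        (fun x => ENNReal.ofReal ((Real.exp 1)⁻¹ / x ^ 2)) := by
  funext x
  by_cases h : x ∈ Set.Icc (Real.exp 1)⁻¹ 1 <;> simp [h]

lemma lint_piece {s : Set ℝ} (hs : MeasurableSet s) (hsub : s ⊆ Set.Icc (Real.exp 1)⁻¹ 1)
    (hint : IntegrableOn (fun x => (Real.exp 1)⁻¹ / x ^ 2) s volume) :
    (∫⁻ x in s, ENNReal.ofReal ((Real.exp 1)⁻¹ / x ^ 2) ∂volume)
      = ENNReal.ofReal (∫ x in s, (Real.exp 1)⁻¹ / x ^ 2) := by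
  rw [ofReal_integral_eq_lintegral_ofReal hint
    (Filter.Eventually.of_forall (fun x => div_nonneg l_pos.le (sq_nonneg x)))]

lemma cont_int (c : ℝ) (hc : 0 < c) :
    IntegrableOn (fun x => (Real.exp 1)⁻¹ / x ^ 2) (Set.Icc c 1) volume := by
  refine ContinuousOn.integrableOn_compact isCompact_Icc ?_
  refine ContinuousOn.div continuousOn_const (continuous_pow 2).continuousOn ?_
  intro x hx
  exact pow_ne_zero 2 (ne_of_gt (lt_of_lt_of_le hc hx.1))

lemma int_inv_sq (c : ℝ) (hc : 0 < c) (hc1 : c ≤ 1) :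
    (∫ x in c..1, (Real.exp 1)⁻¹ / x ^ 2) = (Real.exp 1)⁻¹ * (c⁻¹ - 1) := by
  have h0uIcc : (0:ℝ) ∉ Set.uIcc c 1 := by
    rw [Set.uIcc_of_le hc1]
    rintro ⟨h, _⟩
    exact absurd h (not_le.mpr hc)
  have hcongr : Set.EqOn (fun x : ℝ => (Real.exp 1)⁻¹ / x ^ 2)
      (fun x : ℝ => (Real.exp 1)⁻¹ * x ^ (-2 : ℤ)) (Set.uIcc c 1) := by
    intro x hx
    have hx0 : x ≠ 0 := by
      rw [Set.uIcc_of_le hc1] at hx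
      exact ne_of_gt (lt_of_lt_of_le hc hx.1)
    simp only []
    rw [zpow_neg, div_eq_mul_inv]
    norm_num
    try rfl
  rw [intervalIntegral.integral_congr hcongr, intervalIntegral.integral_const_mul,
    integral_zpow (Or.inr ⟨by norm_num, h0uIcc⟩)]
  norm_num
  try ring

theorem opt_univ : optMeasure Set.univ = 1 := by
  unfold optMeasure
  rw [Measure.add_apply, Measure.smul_apply, smul_eq_mul,
    withDensity_apply _ MeasurableSet.univ, Measure.restrict_univ, dens_eq,
    lintegral_indicator measurableSet_Icc,
    lint_piece measurableSet_Icc (le_refl _) (cont_int _ l_pos)]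
  have h1 : (∫ x in Set.Icc (Real.exp 1)⁻¹ 1, (Real.exp 1)⁻¹ / x ^ 2)
      = 1 - (Real.exp 1)⁻¹ := by
    rw [MeasureTheory.integral_Icc_eq_integral_Ioc, ← intervalIntegral.integral_of_le l_lt_one.le,
      int_inv_sq _ l_pos l_lt_one.le, inv_inv]
    have he : Real.exp 1 ≠ 0 := Real.exp_ne_zero 1
    field_simp
  rw [h1]
  have hd : (Measure.dirac (1:ℝ)) Set.univ = 1 := by simp
  rw [hd, mul_one, ← ENNReal.ofReal_add (by linarith [l_lt_one.le]) l_pos.le]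
  norm_num

instance opt_prob : IsProbabilityMeasure optMeasure := ⟨opt_univ⟩

theorem opt_support : optMeasure (Set.Icc (0:ℝ) 1)ᶜ = 0 := by
  unfold optMeasure
  rw [Measure.add_apply, Measure.smul_apply, smul_eq_mul,
    withDensity_apply _ measurableSet_Icc.compl, dens_eq,
    setLIntegral_indicator measurableSet_Icc]
  have h1 : Set.Icc (Real.exp 1)⁻¹ 1 ∩ (Set.Icc (0:ℝ) 1)ᶜ = ∅ := by
    rw [Set.eq_empty_iff_forall_notMem]
    rintro x ⟨hx1, hx2⟩
    exact hx2 ⟨le_trans l_pos.le hx1.1, hx1.2⟩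
  rw [h1]
  have h2 : (Measure.dirac (1:ℝ)) (Set.Icc (0:ℝ) 1)ᶜ = 0 := by
    rw [Measure.dirac_apply' _ measurableSet_Icc.compl]
    refine Set.indicator_of_notMem (fun h => ?_) 1
    exact h ⟨by norm_num, le_refl 1⟩
  rw [h2, mul_zero, add_zero]
  simp

lemma opt_tail (t : ℝ) (ht : t ∈ Set.Ioo (0:ℝ) 1) :
    g optMeasure t = if t < (Real.exp 1)⁻¹ then 1 else (Real.exp 1)⁻¹ / t := by
  have hdirac : (Measure.dirac (1:ℝ)) (Set.Ioi t) = 1 := by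
    rw [Measure.dirac_apply' _ measurableSet_Ioi,
      Set.indicator_of_mem (Set.mem_Ioi.mpr ht.2)]
    rfl
  have happly : optMeasure (Set.Ioi t)
      = (∫⁻ x in Set.Icc (Real.exp 1)⁻¹ 1 ∩ Set.Ioi t,
          ENNReal.ofReal ((Real.exp 1)⁻¹ / x ^ 2) ∂volume) + ENNReal.ofReal (Real.exp 1)⁻¹ := by
    unfold optMeasure
    rw [Measure.add_apply, Measure.smul_apply, smul_eq_mul,
      withDensity_apply _ measurableSet_Ioi, dens_eq,
      setLIntegral_indicator measurableSet_Icc, hdirac, mul_one]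
  rcases lt_or_ge t (Real.exp 1)⁻¹ with h | h
  · rw [if_pos h]
    have hset : Set.Icc (Real.exp 1)⁻¹ 1 ∩ Set.Ioi t = Set.Icc (Real.exp 1)⁻¹ 1 := by
      rw [Set.inter_eq_left]
      intro x hx
      exact Set.mem_Ioi.mpr (lt_of_lt_of_le h hx.1)
    have hval : (∫ x in Set.Icc (Real.exp 1)⁻¹ 1, (Real.exp 1)⁻¹ / x ^ 2)
        = 1 - (Real.exp 1)⁻¹ := by
      rw [MeasureTheory.integral_Icc_eq_integral_Ioc,
        ← intervalIntegral.integral_of_le l_lt_one.le,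
        int_inv_sq _ l_pos l_lt_one.le, inv_inv]
      have he : Real.exp 1 ≠ 0 := Real.exp_ne_zero 1
      field_simp
    rw [g, happly, hset, lint_piece measurableSet_Icc (le_refl _) (cont_int _ l_pos), hval,
      ← ENNReal.ofReal_add (by linarith [l_lt_one.le]) l_pos.le]
    rw [ENNReal.toReal_ofReal (by linarith [l_lt_one.le])]
    ring
  · rw [if_neg (not_lt.mpr h)]
    have hset : Set.Icc (Real.exp 1)⁻¹ 1 ∩ Set.Ioi t = Set.Ioc t 1 := by
      ext x
      simp only [Set.mem_inter_iff, Set.mem_Icc, Set.mem_Ioi, Set.mem_Ioc]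
      constructor
      · rintro ⟨⟨_, hx1⟩, hx2⟩
        exact ⟨hx2, hx1⟩
      · rintro ⟨hx1, hx2⟩
        exact ⟨⟨le_trans h hx1.le, hx2⟩, hx1⟩
    have hint : IntegrableOn (fun x => (Real.exp 1)⁻¹ / x ^ 2) (Set.Ioc t 1) volume :=
      (cont_int t ht.1).mono_set Set.Ioc_subset_Icc_self
    have hval : (∫ x in Set.Ioc t 1, (Real.exp 1)⁻¹ / x ^ 2)
        = (Real.exp 1)⁻¹ * (t⁻¹ - 1) := by
      rw [← intervalIntegral.integral_of_le ht.2.le, int_inv_sq _ ht.1 ht.2.le]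
    have hsub' : Set.Ioc t 1 ⊆ Set.Icc (Real.exp 1)⁻¹ 1 := by
      intro x hx
      exact ⟨le_trans h hx.1.le, hx.2⟩
    have htinv : (1:ℝ) ≤ t⁻¹ := by
      nlinarith [mul_inv_cancel₀ (ne_of_gt ht.1), ht.1, ht.2.le,
        inv_nonneg.mpr ht.1.le]
    rw [g, happly, hset, lint_piece measurableSet_Ioc hsub' hint, hval,
      ← ENNReal.ofReal_add (by nlinarith [l_pos]) l_pos.le,
      ENNReal.toReal_ofReal (by nlinarith [l_pos])]
    field_simp
    ring

theorem opt_value : orderedPairIntegral optMeasure = 1 / (2 * Real.exp 1 ^ 2) := by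
  rw [repr optMeasure opt_support]
  set l : ℝ := (Real.exp 1)⁻¹ with hl_def
  have hl0 : 0 < l := l_pos
  have hl1 : l < 1 := l_lt_one
  have hIoo_vol : ∀ p q : ℝ, volume (Set.Ioo p q) ≠ ⊤ := by
    intro p q; rw [Real.volume_Ioo]; exact ENNReal.ofReal_ne_top
  have hIco_vol : ∀ p q : ℝ, volume (Set.Ico p q) ≠ ⊤ := by
    intro p q; rw [Real.volume_Ico]; exact ENNReal.ofReal_ne_top
  have hlog : Real.log l = -1 := by
    rw [hl_def, Real.log_inv, Real.log_exp]
  have hint1 : IntegrableOn (g optMeasure) (Set.Ioo (0:ℝ) l) volume :=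
    integrableOn_of_bounded_meas measurableSet_Ioo (hIoo_vol _ _) (g_meas _) (C := 1)
      (fun x _ => by rw [abs_of_nonneg (g_nonneg _ x)]; exact g_le_one _ x)
  have hint2 : IntegrableOn (g optMeasure) (Set.Ico l 1) volume :=
    integrableOn_of_bounded_meas measurableSet_Ico (hIco_vol _ _) (g_meas _) (C := 1)
      (fun x _ => by rw [abs_of_nonneg (g_nonneg _ x)]; exact g_le_one _ x)
  have hint3 : IntegrableOn (fun t => t * g optMeasure t ^ 2) (Set.Ioo (0:ℝ) l) volume :=
    integrableOn_of_bounded_meas measurableSet_Ioo (hIoo_vol _ _)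
      (measurable_id.mul ((g_meas _).pow_const 2)) (C := 1)
      (fun x hx => by
        rw [abs_of_nonneg (mul_nonneg hx.1.le (sq_nonneg _))]
        nlinarith [g_nonneg optMeasure x, g_le_one optMeasure x, hx.1,
          lt_trans hx.2 hl1])
  have hint4 : IntegrableOn (fun t => t * g optMeasure t ^ 2) (Set.Ico l 1) volume :=
    integrableOn_of_bounded_meas measurableSet_Ico (hIco_vol _ _)
      (measurable_id.mul ((g_meas _).pow_const 2)) (C := 1)
      (fun x hx => by
        rw [abs_of_nonneg (mul_nonneg (le_trans hl0.le hx.1) (sq_nonneg _))]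
        nlinarith [g_nonneg optMeasure x, g_le_one optMeasure x, hl0, hx.1, hx.2])
  have hm : (∫ t in Set.Ioo (0:ℝ) 1, g optMeasure t) = 2 * l := by
    rw [Ioo_split l hl0 hl1.le, setIntegral_union (disj_split l) measurableSet_Ico hint1 hint2]
    have e1 : (∫ t in Set.Ioo (0:ℝ) l, g optMeasure t) = ∫ t in Set.Ioo (0:ℝ) l, (1:ℝ) :=
      setIntegral_congr_fun measurableSet_Ioo (fun t ht => by
        rw [opt_tail t ⟨ht.1, lt_trans ht.2 hl1⟩, if_pos ht.2])
    have e2 : (∫ t in Set.Ico l 1, g optMeasure t) = ∫ t in Set.Ico l 1, l * t⁻¹ :=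
      setIntegral_congr_fun measurableSet_Ico (fun t ht => by
        rw [opt_tail t ⟨lt_of_lt_of_le hl0 ht.1, ht.2⟩, if_neg (not_lt.mpr ht.1),
          div_eq_mul_inv])
    have h0uIcc : (0:ℝ) ∉ Set.uIcc l 1 := by
      rw [Set.uIcc_of_le hl1.le]
      rintro ⟨hh, _⟩
      exact absurd hh (not_le.mpr hl0)
    rw [e1, e2, integral_Ioo 0 l hl0.le, integral_Ico l 1 hl1.le,
      intervalIntegral.integral_const, intervalIntegral.integral_const_mul,
      integral_inv h0uIcc, one_div, Real.log_inv, hlog, smul_eq_mul]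
    ring
  have hw : (∫ t in Set.Ioo (0:ℝ) 1, t * g optMeasure t ^ 2) = l^2/2 + l^2 := by
    rw [Ioo_split l hl0 hl1.le, setIntegral_union (disj_split l) measurableSet_Ico hint3 hint4]
    have e1 : (∫ t in Set.Ioo (0:ℝ) l, t * g optMeasure t ^ 2)
        = ∫ t in Set.Ioo (0:ℝ) l, t :=
      setIntegral_congr_fun measurableSet_Ioo (fun t ht => by
        rw [opt_tail t ⟨ht.1, lt_trans ht.2 hl1⟩, if_pos ht.2]
        ring)
    have e2 : (∫ t in Set.Ico l 1, t * g optMeasure t ^ 2)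
        = ∫ t in Set.Ico l 1, l^2 * t⁻¹ :=
      setIntegral_congr_fun measurableSet_Ico (fun t ht => by
        rw [opt_tail t ⟨lt_of_lt_of_le hl0 ht.1, ht.2⟩, if_neg (not_lt.mpr ht.1)]
        have ht0 : t ≠ 0 := ne_of_gt (lt_of_lt_of_le hl0 ht.1)
        have he : Real.exp 1 ≠ 0 := Real.exp_ne_zero 1
        rw [hl_def, div_pow]
        field_simp)
    have h0uIcc : (0:ℝ) ∉ Set.uIcc l 1 := by
      rw [Set.uIcc_of_le hl1.le]
      rintro ⟨hh, _⟩
      exact absurd hh (not_le.mpr hl0)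
    rw [e1, e2, integral_Ioo 0 l hl0.le, integral_Ico l 1 hl1.le,
      integral_id, intervalIntegral.integral_const_mul,
      integral_inv h0uIcc, one_div, Real.log_inv, hlog]
    ring
  rw [hm, hw, hl_def]
  have he : Real.exp 1 ≠ 0 := Real.exp_ne_zero 1
  field_simp
  ring

end Opt1010

theorem opt_1010_constant :
    24 * sSup {r : ℝ | ∃ μ : Measure ℝ, IsProbabilityMeasure μ ∧
          μ (Set.Icc (0:ℝ) 1)ᶜ = 0 ∧ r = orderedPairIntegral μ}
        = 12 / Real.exp 1 ^ 2 ∧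
    IsGreatest {r : ℝ | ∃ μ : Measure ℝ, IsProbabilityMeasure μ ∧
          μ (Set.Icc (0:ℝ) 1)ᶜ = 0 ∧ r = orderedPairIntegral μ}
        (orderedPairIntegral optMeasure) ∧
    orderedPairIntegral optMeasure = 1 / (2 * Real.exp 1 ^ 2) := by

  have hval := Opt1010.opt_value
  have hgreat : IsGreatest {r : ℝ | ∃ μ : Measure ℝ, IsProbabilityMeasure μ ∧
      μ (Set.Icc (0:ℝ) 1)ᶜ = 0 ∧ r = orderedPairIntegral μ}
      (orderedPairIntegral optMeasure) := by
    constructor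
    · exact ⟨optMeasure, Opt1010.opt_prob, Opt1010.opt_support, rfl⟩
    · rintro r ⟨μ, hμ, hμs, rfl⟩
      haveI := hμ
      rw [hval]
      exact Opt1010.upper_bound μ hμs
  refine ⟨?_, hgreat, hval⟩
  rw [hgreat.csSup_eq, hval]
  have he : Real.exp 1 ≠ 0 := Real.exp_ne_zero 1
  field_simp
  ring
end
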